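/- arXiv:2302.08376 — 7 statements merged into one kernel-verified Lean document; each statement's English description precedes it below -/
import Mathlib

section
/- The matrix y is a normal element of the standard hereditary order: y^e equals the scalar matrix t·Id, and the left coset y·Δ = {y·M : M ∈ Δ} coincides with the right coset Δ·y = {M·y : M ∈ Δ}, and both are equal to the set J of e×e matrices M over K such that M i j lies in the image of R in K when i < j and lies in t·R when j ≤ i (for all indices 0 ≤ i, j ≤ e−1). -/
/-- The standard hereditary order of ramification index `e` over a DVR `R` with
uniformizer `t`, inside the `e × e` matrices over the fraction field `K`:
matrices whose `(i,j)` entry lies in `t·R` when `j < i` and in (the image of) `R`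
otherwise. -/
def stdHereditaryOrder (R K : Type*) [CommRing R] [Field K] [Algebra R K]
    (t : R) (e : ℕ) : Set (Matrix (Fin e) (Fin e) K) :=
  {M | ∀ i j : Fin e,
    if (j : ℕ) < (i : ℕ) then ∃ r : R, algebraMap R K (t * r) = M i j
    else ∃ r : R, algebraMap R K r = M i j}

/-- The matrix `y`: `y i j = 1` if `j = i + 1`, `y i j = t` if `(i,j) = (e-1, 0)`,
and `0` otherwise. -/
def yMat (R K : Type*) [CommRing R] [Field K] [Algebra R K] (t : R) (e : ℕ) :
    Matrix (Fin e) (Fin e) K :=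
  Matrix.of fun i j =>
    if (j : ℕ) = (i : ℕ) + 1 then 1
    else if (i : ℕ) = e - 1 ∧ (j : ℕ) = 0 then algebraMap R K t
    else 0

/-!
Write `σ = finRotate e` for the cyclic shift of `Fin e`. Then `y = D * P_σ`, where `P_σ` is the
permutation matrix of `σ` and `D = diag(1, …, 1, t)`. So left multiplication by `y` shifts the
rows of a matrix cyclically up by one and multiplies the row that wraps around by `t`; right
multiplication shifts the columns cyclically to the right and multiplies the wrapped column by `t`.
Both `Δ` and `J` are cut out by one condition per entry, and shifting the entry pattern of `Δ` by
one row (or one column) while multiplying the wrapped row (or column) by `t` produces exactly the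
pattern of `J`. For the power, `y ^ k` has `1` on the `k`-th superdiagonal and `t` on the
`(e - k)`-th subdiagonal, so `y ^ e = t • 1`.
-/

namespace Matrix

variable {l m n o α β : Type*}

def withEntriesIn (L : m → n → Set α) : Set (Matrix m n α) :=
  {M | ∀ i j, M i j ∈ L i j}

theorem image_of_withEntriesIn (f : m → n → α → β) (L : m → n → Set α) :
    (fun M : Matrix m n α => of fun i j => f i j (M i j)) '' withEntriesIn L =
      withEntriesIn fun i j => f i j '' L i j := by
  ext N
  constructor
  · rintro ⟨M, hM, rfl⟩ i j
    exact ⟨M i j, hM i j, rfl⟩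
  · intro hN
    choose M hM hMN using hN
    exact ⟨M, hM, ext hMN⟩

theorem image_submatrix_withEntriesIn (σ : l ≃ m) (τ : o ≃ n) (L : m → n → Set α) :
    (·.submatrix σ τ) '' withEntriesIn L = withEntriesIn fun i j => L (σ i) (τ j) := by
  ext N
  constructor
  · rintro ⟨M, hM, rfl⟩ i j
    exact hM (σ i) (τ j)
  · intro hN
    refine ⟨N.submatrix σ.symm τ.symm, fun i j => ?_, by simp⟩
    simpa using hN (σ.symm i) (τ.symm j)

theorem image_diagonal_mul_withEntriesIn [Fintype m] [DecidableEq m] [NonUnitalNonAssocSemiring α]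
    (c : m → α) (L : m → n → Set α) :
    (diagonal c * ·) '' withEntriesIn L = withEntriesIn fun i j => (c i * ·) '' L i j := by
  rw [← image_of_withEntriesIn]
  congr! with M
  ext i j
  exact diagonal_mul c M i j

theorem image_mul_diagonal_withEntriesIn [Fintype n] [DecidableEq n] [NonUnitalNonAssocSemiring α]
    (c : n → α) (L : m → n → Set α) :
    (· * diagonal c) '' withEntriesIn L = withEntriesIn fun i j => (· * c j) '' L i j := by
  rw [← image_of_withEntriesIn]
  congr! with M
  ext i j
  exact mul_diagonal c M i j

end Matrix

open Matrix

section NormalElement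

variable (R K : Type*) [CommRing R] [Field K] [Algebra R K] (t : R)

/-- The Jacobson radical `J` of `stdHereditaryOrder R K t e`. -/
def stdHereditaryRadical (e : ℕ) : Set (Matrix (Fin e) (Fin e) K) :=
  {M | ∀ i j : Fin e,
    if (i : ℕ) < (j : ℕ) then ∃ r : R, algebraMap R K r = M i j
    else ∃ r : R, algebraMap R K (t * r) = M i j}

section Entries

variable {e : ℕ}

def orderEntry (i j : Fin e) : Set K :=
  if (j : ℕ) < i then Set.range (fun r => algebraMap R K (t * r)) else Set.range (algebraMap R K)

def radicalEntry (i j : Fin e) : Set K :=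
  if (i : ℕ) < j then Set.range (algebraMap R K) else Set.range (fun r => algebraMap R K (t * r))

theorem stdHereditaryOrder_eq_withEntriesIn :
    stdHereditaryOrder R K t e = withEntriesIn (orderEntry R K t) := by
  ext M
  simp only [stdHereditaryOrder, withEntriesIn, orderEntry, Set.mem_ofPred_eq]
  congr! 3
  split_ifs <;> rfl

theorem stdHereditaryRadical_eq_withEntriesIn :
    stdHereditaryRadical R K t e = withEntriesIn (radicalEntry R K t) := by
  ext M
  simp only [stdHereditaryRadical, withEntriesIn, radicalEntry, Set.mem_ofPred_eq]
  congr! 3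
  split_ifs <;> rfl

end Entries

theorem image_algebraMap_mul_range :
    (algebraMap R K t * ·) '' Set.range (algebraMap R K) =
      Set.range (fun r => algebraMap R K (t * r)) := by
  rw [← Set.range_comp]
  simp only [Function.comp_def, map_mul]

theorem image_mul_algebraMap_range :
    (· * algebraMap R K t) '' Set.range (algebraMap R K) =
      Set.range (fun r => algebraMap R K (t * r)) := by
  simp only [mul_comm _ (algebraMap R K t), image_algebraMap_mul_range]

variable {n : ℕ}

def yWeight (n : ℕ) : Fin (n + 1) → K :=
  Pi.mulSingle (Fin.last n) (algebraMap R K t)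

theorem yMat_eq :
    yMat R K t (n + 1) = diagonal (yWeight R K t n) * (finRotate (n + 1)).toPEquiv.toMatrix := by
  ext i j
  rw [diagonal_mul, PEquiv.toMatrix_toPEquiv_apply, Pi.single_apply, yWeight, Pi.mulSingle_apply]
  simp only [yMat, of_apply, coe_finRotate, Fin.ext_iff, Fin.val_last, mul_ite, mul_one, mul_zero,
    Nat.add_sub_cancel]
  have := i.isLt
  have := j.isLt
  split_ifs <;> first | rfl | omega

theorem yMat_mul_apply (M : Matrix (Fin (n + 1)) (Fin (n + 1)) K) (i j : Fin (n + 1)) :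
    (yMat R K t (n + 1) * M) i j = yWeight R K t n i * M (finRotate _ i) j := by
  rw [yMat_eq, mul_assoc, PEquiv.toMatrix_toPEquiv_mul, diagonal_mul, submatrix_apply, id]

theorem yMat_pow_apply {k : ℕ} (hk : k ≤ n + 1) (i j : Fin (n + 1)) :
    (yMat R K t (n + 1) ^ k) i j =
      if (j : ℕ) = i + k then 1 else if (j : ℕ) + (n + 1) = i + k then algebraMap R K t else 0 := by
  have := i.isLt
  have := j.isLt
  induction k generalizing i with
  | zero =>
    rw [pow_zero, one_apply]
    simp only [Fin.ext_iff, add_zero]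
    split_ifs <;> first | rfl | omega
  | succ k ih =>
    rw [pow_succ', yMat_mul_apply, ih (by omega) _ (finRotate _ i).isLt]
    rcases eq_or_ne i (Fin.last n) with rfl | hi
    · simp only [yWeight, Pi.mulSingle_eq_same, finRotate_last, Fin.val_zero, Fin.val_last,
        mul_ite, mul_one, mul_zero]
      split_ifs <;> first | rfl | omega
    · simp only [yWeight, Pi.mulSingle_eq_of_ne hi, one_mul, coe_finRotate_of_ne_last hi]
      split_ifs <;> first | rfl | omega

theorem yMat_pow_self : yMat R K t (n + 1) ^ (n + 1) = scalar (Fin (n + 1)) (algebraMap R K t) := by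
  ext i j
  rw [yMat_pow_apply R K t le_rfl, scalar_apply, diagonal_apply]
  simp only [Fin.ext_iff]
  have := j.isLt
  split_ifs <;> first | rfl | omega

theorem image_yWeight_mul_orderEntry (i j : Fin (n + 1)) :
    (yWeight R K t n i * ·) '' orderEntry R K t (finRotate _ i) j = radicalEntry R K t i j := by
  rcases eq_or_ne i (Fin.last n) with rfl | hi
  · have : ¬ n < (j : ℕ) := by omega
    simp only [yWeight, Pi.mulSingle_eq_same, orderEntry, radicalEntry, finRotate_last,
      Fin.val_zero, Fin.val_last, Nat.not_lt_zero, this, if_false, image_algebraMap_mul_range]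
  · simp only [yWeight, Pi.mulSingle_eq_of_ne hi, one_mul, Set.image_id', orderEntry, radicalEntry,
      coe_finRotate_of_ne_last hi]
    split_ifs <;> first | rfl | omega

theorem image_mul_yWeight_orderEntry (i j : Fin (n + 1)) :
    (· * yWeight R K t n ((finRotate _).symm j)) '' orderEntry R K t i ((finRotate _).symm j) =
      radicalEntry R K t i j := by
  rcases eq_or_ne j 0 with rfl | hj
  · have hsymm : (finRotate (n + 1)).symm 0 = Fin.last n :=
      (Equiv.symm_apply_eq _).mpr finRotate_last.symm
    have : ¬ n < (i : ℕ) := by omega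
    simp only [yWeight, hsymm, Pi.mulSingle_eq_same, orderEntry, radicalEntry, Fin.val_zero,
      Fin.val_last, Nat.not_lt_zero, this, if_false, image_mul_algebraMap_range]
  · have hlast : (finRotate _).symm j ≠ Fin.last n := fun h =>
      hj (((Equiv.symm_apply_eq _).mp h).trans finRotate_last)
    have : (j : ℕ) ≠ 0 := Fin.val_ne_zero_iff.mpr hj
    simp only [yWeight, Pi.mulSingle_eq_of_ne hlast, mul_one, Set.image_id', orderEntry,
      radicalEntry, coe_finRotate_symm_of_ne_zero hj]
    split_ifs <;> first | rfl | omega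

theorem image_yMat_mul_stdHereditaryOrder :
    (yMat R K t (n + 1) * ·) '' stdHereditaryOrder R K t (n + 1) =
      stdHereditaryRadical R K t (n + 1) := by
  have hmul : (yMat R K t (n + 1) * ·) = (diagonal (yWeight R K t n) * ·) ∘
      (·.submatrix (finRotate _) (Equiv.refl _)) := by
    funext M
    rw [yMat_eq, Function.comp_apply, mul_assoc, PEquiv.toMatrix_toPEquiv_mul]
    rfl
  rw [hmul, Set.image_comp, stdHereditaryOrder_eq_withEntriesIn, image_submatrix_withEntriesIn,
    image_diagonal_mul_withEntriesIn, stdHereditaryRadical_eq_withEntriesIn]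
  simp only [Equiv.refl_apply, image_yWeight_mul_orderEntry]

theorem image_mul_yMat_stdHereditaryOrder :
    (· * yMat R K t (n + 1)) '' stdHereditaryOrder R K t (n + 1) =
      stdHereditaryRadical R K t (n + 1) := by
  have hmul : (· * yMat R K t (n + 1)) = (·.submatrix (Equiv.refl _) (finRotate _).symm) ∘
      (· * diagonal (yWeight R K t n)) := by
    funext M
    rw [yMat_eq, Function.comp_apply, ← mul_assoc, PEquiv.mul_toMatrix_toPEquiv]
    rfl
  rw [hmul, Set.image_comp, stdHereditaryOrder_eq_withEntriesIn, image_mul_diagonal_withEntriesIn,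
    image_submatrix_withEntriesIn, stdHereditaryRadical_eq_withEntriesIn]
  simp only [Equiv.refl_apply, image_mul_yWeight_orderEntry]

end NormalElement

theorem yMat_normal_element_general (R K : Type*) [CommRing R] [Field K] [Algebra R K] (t : R)
    (e : ℕ) (he : 1 ≤ e) :
    (yMat R K t e) ^ e = Matrix.scalar (Fin e) (algebraMap R K t) ∧
    (fun M => yMat R K t e * M) '' stdHereditaryOrder R K t e
      = (fun M => M * yMat R K t e) '' stdHereditaryOrder R K t e ∧
    (fun M => yMat R K t e * M) '' stdHereditaryOrder R K t e
      = {M : Matrix (Fin e) (Fin e) K | ∀ i j : Fin e,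
          if (i : ℕ) < (j : ℕ) then ∃ r : R, algebraMap R K r = M i j
          else ∃ r : R, algebraMap R K (t * r) = M i j} := by
  obtain ⟨n, rfl⟩ : ∃ n, e = n + 1 := ⟨e - 1, by omega⟩
  have hleft := image_yMat_mul_stdHereditaryOrder R K t (n := n)
  exact ⟨yMat_pow_self R K t, hleft.trans (image_mul_yMat_stdHereditaryOrder R K t).symm, hleft⟩

/-- `y` is a normal element of the standard hereditary order: `y ^ e = t · Id`,
`y·Δ = Δ·y`, and both equal the set `J` of matrices with `(i,j)` entry in `R`
for `i < j` and in `t·R` for `j ≤ i`. -/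
theorem yMat_normal_element (R K : Type*) [CommRing R] [IsDomain R]
    [IsDiscreteValuationRing R] [Field K] [Algebra R K] [IsFractionRing R K]
    (t : R) (ht : Ideal.span {t} = IsLocalRing.maximalIdeal R)
    (e : ℕ) (he : 1 ≤ e) :
    (yMat R K t e) ^ e = Matrix.scalar (Fin e) (algebraMap R K t) ∧
    (fun M => yMat R K t e * M) '' stdHereditaryOrder R K t e
      = (fun M => M * yMat R K t e) '' stdHereditaryOrder R K t e ∧
    (fun M => yMat R K t e * M) '' stdHereditaryOrder R K t e
      = {M : Matrix (Fin e) (Fin e) K | ∀ i j : Fin e,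
          if (i : ℕ) < (j : ℕ) then ∃ r : R, algebraMap R K r = M i j
          else ∃ r : R, algebraMap R K (t * r) = M i j} :=
  yMat_normal_element_general R K t e he
end

section
/- For every integer i ≥ 1, the i-th power ω^i of the trace dual ω of the standard hereditary order Δ (the power taken as R-submodules inside the R-algebra of e×e matrices over K) equals y^{−i(e−1)}·Δ = {y^{−i(e−1)}·M : M ∈ Δ}, and equals the set of e×e matrices M over K such that for all indices j, k (with 0 ≤ j, k ≤ e−1) the entry M j k lies in the R-submodule of K spanned by t^m with m = −⌊(k − j + i(e−1))/e⌋ (floor of the rational number, with j, k, i, e regarded as integers). -/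
/-- The trace dual `ω` of `Δ`, as an `R`-submodule of the matrix algebra:
matrices `M` with `trace (M * N)` in the image of `R` in `K` for all `N ∈ Δ`. -/
def traceDualSubmodule (R K : Type*) [CommRing R] [Field K] [Algebra R K]
    (t : R) (e : ℕ) : Submodule R (Matrix (Fin e) (Fin e) K) where
  carrier := {M | ∀ N ∈ stdHereditaryOrder R K t e,
    Matrix.trace (M * N) ∈ (1 : Submodule R K)}
  add_mem' := by
    intro a b ha hb N hN
    rw [Matrix.add_mul, Matrix.trace_add]
    exact add_mem (ha N hN) (hb N hN)
  zero_mem' := by intro N hN; simp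
  smul_mem' := by
    intro r M hM N hN
    rw [Matrix.smul_mul, Matrix.trace_smul]
    exact Submodule.smul_mem _ _ (hM N hN)

/-!
Everything is expressed through the entrywise lattices (`fracIdeal`)
`P a = {M | M j k ∈ R ∙ t ^ (-⌊(k - j + a) / e⌋)}`, `a ∈ ℤ`.
Superadditivity of the floor gives `P a * P b ≤ P (a + b)`.
The matrix `y` is monomial along the cyclic shift `j ↦ j + 1 mod e`, hence a unit, with
`y ∈ P (-1)` and `y⁻¹ ∈ P 1`; so `y ^ b ∈ P (-b)` for all `b ∈ ℤ`, and writing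
`M = (M y ^ b) y ^ (-b)` turns the inclusion into `P a * P b = P (a + b)`, while
`y ^ b • P a = P (a - b)`. Finally `Δ = P 0` by inspection, and `ω = P (e - 1)`: one inclusion
because the diagonal of `P (e - 1) * P 0 ⊆ P (e - 1)` is integral, the other by pairing with
the matrix units of `Δ`. Hence `ω ^ i = P (i (e - 1)) = y ^ (-i (e - 1)) Δ`.
-/

open Submodule

theorem Int.add_sub_one_ediv_eq_neg_neg_ediv {x e : ℤ} (he : 0 < e) :
    (x + (e - 1)) / e = -(-x / e) := by
  rw [Int.ediv_eq_iff_of_pos he]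
  have h1 := Int.ediv_mul_le (-x) he.ne'
  have h2 := Int.lt_ediv_add_one_mul_self (-x) he
  constructor <;> linarith

theorem val_finRotate {e : ℕ} (i : Fin e) :
    (finRotate e i : ℕ) = if (i : ℕ) = e - 1 then 0 else (i : ℕ) + 1 := by
  obtain ⟨n, rfl⟩ : ∃ n, e = n + 1 := ⟨e - 1, by have := i.pos; omega⟩
  rw [coe_finRotate]
  simp [Fin.ext_iff]

namespace HereditaryOrder

variable {R K : Type*} [CommRing R] [Field K] [Algebra R K] {t : R}

lemma span_zpow_le_span_zpow (hT : algebraMap R K t ≠ 0) {m n : ℤ} (h : n ≤ m) :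
    span R {algebraMap R K t ^ m} ≤ span R {algebraMap R K t ^ n} := by
  rw [span_singleton_le_iff_mem, mem_span_singleton]
  refine ⟨t ^ (m - n).toNat, ?_⟩
  rw [Algebra.smul_def, map_pow, ← zpow_natCast, ← zpow_add₀ hT, Int.toNat_of_nonneg (by omega),
    sub_add_cancel]

lemma mul_mem_span_zpow (hT : algebraMap R K t ≠ 0) {x y : K} {m n p : ℤ}
    (hx : x ∈ span R {algebraMap R K t ^ m}) (hy : y ∈ span R {algebraMap R K t ^ n})
    (h : p ≤ m + n) : x * y ∈ span R {algebraMap R K t ^ p} := by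
  refine span_zpow_le_span_zpow hT h ?_
  rw [zpow_add₀ hT, ← Set.singleton_mul_singleton, ← span_mul_span]
  exact mul_mem_mul hx hy

variable (R K) in
def fracIdeal (t : R) (e : ℕ) (a : ℤ) : Submodule R (Matrix (Fin e) (Fin e) K) where
  carrier := {M | ∀ j k : Fin e, M j k ∈ span R {algebraMap R K t ^ (-(((k : ℤ) - j + a) / e))}}
  add_mem' hA hB j k := add_mem (hA j k) (hB j k)
  zero_mem' _ _ := zero_mem _
  smul_mem' r _ hM j k := smul_mem _ r (hM j k)

variable {e : ℕ}

lemma one_mem_fracIdeal : (1 : Matrix (Fin e) (Fin e) K) ∈ fracIdeal R K t e 0 := by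
  intro j k
  rcases eq_or_ne j k with rfl | h
  · simp
  · simp [Matrix.one_apply_ne h]

lemma mul_mem_fracIdeal (hT : algebraMap R K t ≠ 0) {a b : ℤ} {A B : Matrix (Fin e) (Fin e) K}
    (hA : A ∈ fracIdeal R K t e a) (hB : B ∈ fracIdeal R K t e b) :
    A * B ∈ fracIdeal R K t e (a + b) := by
  intro j k
  have he : (0 : ℤ) < e := by exact_mod_cast j.pos
  rw [Matrix.mul_apply]
  refine sum_mem fun l _ => mul_mem_span_zpow hT (hA j l) (hB l k) ?_
  have := Int.ediv_add_ediv_le_add_ediv (x := (l : ℤ) - j + a) (y := (k : ℤ) - l + b) he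
  rw [show (l : ℤ) - j + a + (k - l + b) = k - j + (a + b) by ring] at this
  omega

lemma single_mem_fracIdeal {a : ℤ} {k j : Fin e} {x : K}
    (hx : x ∈ span R {algebraMap R K t ^ (-(((j : ℤ) - k + a) / e))}) :
    Matrix.single k j x ∈ fracIdeal R K t e a := by
  intro r c
  by_cases h : k = r ∧ j = c
  · obtain ⟨rfl, rfl⟩ := h
    simpa using hx
  · simp [Matrix.single_apply_of_ne _ _ _ _ _ h]

lemma stdHereditaryOrder_eq_fracIdeal :
    stdHereditaryOrder R K t e = fracIdeal R K t e 0 := by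
  ext M
  refine forall₂_congr fun i j => ?_
  have he : (0 : ℤ) < e := by exact_mod_cast i.pos
  have := i.isLt
  have := j.isLt
  rw [add_zero, mem_span_singleton]
  split_ifs with h
  · rw [(Int.ediv_eq_iff_of_pos (y := -1) he).2 ⟨by omega, by omega⟩, neg_neg, zpow_one]
    simp [Algebra.smul_def, mul_comm]
  · rw [(Int.ediv_eq_iff_of_pos (y := 0) he).2 ⟨by omega, by omega⟩, neg_zero, zpow_zero]
    simp [Algebra.smul_def]

lemma traceDualSubmodule_eq_fracIdeal (hT : algebraMap R K t ≠ 0) :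
    traceDualSubmodule R K t e = fracIdeal R K t e (e - 1) := by
  ext M
  constructor
  · intro hM j k
    have he : (0 : ℤ) < e := by exact_mod_cast j.pos
    rw [Int.add_sub_one_ediv_eq_neg_neg_ediv he, neg_neg, neg_sub]
    have hN : Matrix.single k j (algebraMap R K t ^ (-(((j : ℤ) - k) / e))) ∈
        stdHereditaryOrder R K t e := by
      rw [stdHereditaryOrder_eq_fracIdeal]
      exact single_mem_fracIdeal (by rw [add_zero]; exact mem_span_singleton_self _)
    obtain ⟨r, hr⟩ := mem_one.1 (hM _ hN)
    rw [Matrix.trace_mul_single, MulOpposite.smul_eq_mul_unop, MulOpposite.unop_op, zpow_neg] at hr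
    exact mem_span_singleton.2
      ⟨r, by rw [Algebra.smul_def, hr, inv_mul_cancel_right₀ (zpow_ne_zero _ hT)]⟩
  · intro hM N hN
    rw [stdHereditaryOrder_eq_fracIdeal] at hN
    have hMN := mul_mem_fracIdeal hT hM hN
    refine sum_mem fun a _ => ?_
    have he : (0 : ℤ) < e := by exact_mod_cast a.pos
    have := hMN a a
    rwa [add_zero, sub_self, zero_add, (Int.ediv_eq_iff_of_pos (y := 0) he).2 ⟨by omega, by omega⟩,
      neg_zero, zpow_zero, ← one_eq_span] at this

lemma yMat_apply (i j : Fin e) : yMat R K t e i j =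
    if j = finRotate e i then (if (i : ℕ) = e - 1 then algebraMap R K t else 1) else 0 := by
  have := j.isLt
  simp only [yMat, Matrix.of_apply, Fin.ext_iff, val_finRotate]
  split_ifs <;> first | rfl | omega

variable (R K) in
def yInv (t : R) (e : ℕ) : Matrix (Fin e) (Fin e) K :=
  Matrix.of fun i j =>
    if i = finRotate e j then (if (j : ℕ) = e - 1 then (algebraMap R K t)⁻¹ else 1) else 0

lemma yMat_mul_yInv (hT : algebraMap R K t ≠ 0) : yMat R K t e * yInv R K t e = 1 := by
  ext i k
  simp only [Matrix.mul_apply, yMat_apply, yInv, Matrix.of_apply, ite_mul, mul_ite, zero_mul, mul_zero,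
    Finset.sum_ite_eq', Finset.mem_univ, if_true, (finRotate e).injective.eq_iff, Matrix.one_apply]
  rcases eq_or_ne i k with rfl | hik
  · split_ifs <;> simp [hT]
  · simp [hik, hik.symm]

def yUnit (hT : algebraMap R K t ≠ 0) : (Matrix (Fin e) (Fin e) K)ˣ :=
  ⟨yMat R K t e, yInv R K t e, yMat_mul_yInv hT, mul_eq_one_comm.mp (yMat_mul_yInv hT)⟩

lemma yMat_mem_fracIdeal : yMat R K t e ∈ fracIdeal R K t e (-1) := by
  intro i j
  have he : (0 : ℤ) < e := by exact_mod_cast i.pos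
  have := i.isLt
  rw [yMat_apply]
  split_ifs with hj hi
  · rw [hj, val_finRotate, if_pos hi, (Int.ediv_eq_iff_of_pos (y := -1) he).2 ⟨by omega, by omega⟩]
    simp
  · rw [hj, val_finRotate, if_neg hi, (Int.ediv_eq_iff_of_pos (y := 0) he).2 ⟨by omega, by omega⟩]
    simp
  · exact zero_mem _

lemma yInv_mem_fracIdeal : yInv R K t e ∈ fracIdeal R K t e 1 := by
  intro i j
  have he : (0 : ℤ) < e := by exact_mod_cast i.pos
  have := j.isLt
  simp only [yInv, Matrix.of_apply]
  split_ifs with hi hj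
  · rw [hi, val_finRotate, if_pos hj, (Int.ediv_eq_iff_of_pos (y := 1) he).2 ⟨by omega, by omega⟩]
    simp
  · rw [hi, val_finRotate, if_neg hj, (Int.ediv_eq_iff_of_pos (y := 0) he).2 ⟨by omega, by omega⟩]
    simp
  · exact zero_mem _

lemma yUnit_zpow_mem_fracIdeal (hT : algebraMap R K t ≠ 0) (b : ℤ) :
    (yUnit hT ^ b).val ∈ fracIdeal R K t e (-b) := by
  induction b using Int.induction_on with
  | zero => simpa using one_mem_fracIdeal
  | succ n ih =>
    rw [zpow_add_one, Units.val_mul, neg_add]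
    exact mul_mem_fracIdeal hT ih yMat_mem_fracIdeal
  | pred n ih =>
    rw [zpow_sub_one, Units.val_mul, neg_sub', sub_neg_eq_add]
    exact mul_mem_fracIdeal hT ih yInv_mem_fracIdeal

lemma fracIdeal_mul_fracIdeal (hT : algebraMap R K t ≠ 0) (a b : ℤ) :
    fracIdeal R K t e a * fracIdeal R K t e b = fracIdeal R K t e (a + b) := by
  refine le_antisymm (mul_le.2 fun A hA B hB => mul_mem_fracIdeal hT hA hB) fun M hM => ?_
  have hMy : M * (yUnit hT ^ b).val ∈ fracIdeal R K t e a := by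
    simpa using mul_mem_fracIdeal hT hM (yUnit_zpow_mem_fracIdeal hT b)
  have := mul_mem_mul hMy (yUnit_zpow_mem_fracIdeal hT (-b))
  rwa [neg_neg, zpow_neg, Units.mul_inv_cancel_right] at this

lemma image_yUnit_zpow_mul_fracIdeal (hT : algebraMap R K t ≠ 0) (a b : ℤ) :
    (fun M => (yUnit hT ^ b).val * M) '' (fracIdeal R K t e a : Set (Matrix (Fin e) (Fin e) K)) =
      fracIdeal R K t e (a - b) := by
  ext M
  constructor
  · rintro ⟨N, hN, rfl⟩
    simpa [neg_add_eq_sub] using mul_mem_fracIdeal hT (yUnit_zpow_mem_fracIdeal hT b) hN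
  · intro hM
    refine ⟨(yUnit hT ^ (-b)).val * M, ?_, ?_⟩
    · simpa using mul_mem_fracIdeal hT (yUnit_zpow_mem_fracIdeal hT (-b)) hM
    · simp only [zpow_neg, Units.mul_inv_cancel_left]

lemma traceDualSubmodule_pow (hT : algebraMap R K t ≠ 0) {i : ℕ} (hi : 1 ≤ i) :
    traceDualSubmodule R K t e ^ i = fracIdeal R K t e (i * (e - 1)) := by
  induction i, hi using Nat.le_induction with
  | base => simp [traceDualSubmodule_eq_fracIdeal hT]
  | succ i _ ih =>
    rw [pow_succ, ih, traceDualSubmodule_eq_fracIdeal hT, fracIdeal_mul_fracIdeal hT]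
    congr 1
    push_cast
    ring

end HereditaryOrder

theorem traceDual_pow_eq_general (R K : Type*) [CommRing R] [IsDomain R]
    [IsDiscreteValuationRing R] [Field K] [Algebra R K] [IsFractionRing R K]
    (t : R) (ht : Ideal.span {t} = IsLocalRing.maximalIdeal R)
    (e : ℕ) :
    ∀ i : ℕ, 1 ≤ i →
      (∀ u : (Matrix (Fin e) (Fin e) K)ˣ,
        (u : Matrix (Fin e) (Fin e) K) = yMat R K t e →
        ((traceDualSubmodule R K t e ^ i : Submodule R (Matrix (Fin e) (Fin e) K)) :
            Set (Matrix (Fin e) (Fin e) K))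
          = (fun M => ((u ^ (-(i : ℤ) * ((e : ℤ) - 1)) : (Matrix (Fin e) (Fin e) K)ˣ) :
              Matrix (Fin e) (Fin e) K) * M) '' stdHereditaryOrder R K t e) ∧
      ((traceDualSubmodule R K t e ^ i : Submodule R (Matrix (Fin e) (Fin e) K)) :
          Set (Matrix (Fin e) (Fin e) K))
        = {M : Matrix (Fin e) (Fin e) K | ∀ j k : Fin e,
            M j k ∈ Submodule.span R
              {(algebraMap R K t) ^
                (-(Int.fdiv ((k : ℤ) - (j : ℤ) + (i : ℤ) * ((e : ℤ) - 1)) (e : ℤ)))}} := by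
  intro i hi
  have hT : algebraMap R K t ≠ 0 := by
    rw [ne_eq, IsFractionRing.to_map_eq_zero_iff]
    exact ((IsDiscreteValuationRing.irreducible_iff_uniformizer t).2 ht.symm).ne_zero
  have hpow := HereditaryOrder.traceDualSubmodule_pow (e := e) hT hi
  refine ⟨fun u hu => ?_, ?_⟩
  · obtain rfl : u = HereditaryOrder.yUnit hT := Units.ext hu
    rw [hpow, HereditaryOrder.stdHereditaryOrder_eq_fracIdeal,
      HereditaryOrder.image_yUnit_zpow_mul_fracIdeal, zero_sub, neg_mul, neg_neg]
  · rw [hpow]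
    ext M
    simp only [Int.fdiv_eq_ediv_of_nonneg _ (Int.natCast_nonneg e)]
    rfl

/-- For every `i ≥ 1`, the `i`-th power of the trace dual `ω` (as `R`-submodules
of the matrix algebra) equals `y^(-i(e-1)) · Δ`, and equals the set of matrices
whose `(j,k)` entry lies in the `R`-span of `t ^ (-⌊(k - j + i(e-1))/e⌋)`. -/
theorem traceDual_pow_eq (R K : Type*) [CommRing R] [IsDomain R]
    [IsDiscreteValuationRing R] [Field K] [Algebra R K] [IsFractionRing R K]
    (t : R) (ht : Ideal.span {t} = IsLocalRing.maximalIdeal R)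
    (e : ℕ) (he : 1 ≤ e) :
    ∀ i : ℕ, 1 ≤ i →
      (∀ u : (Matrix (Fin e) (Fin e) K)ˣ,
        (u : Matrix (Fin e) (Fin e) K) = yMat R K t e →
        ((traceDualSubmodule R K t e ^ i : Submodule R (Matrix (Fin e) (Fin e) K)) :
            Set (Matrix (Fin e) (Fin e) K))
          = (fun M => ((u ^ (-(i : ℤ) * ((e : ℤ) - 1)) : (Matrix (Fin e) (Fin e) K)ˣ) :
              Matrix (Fin e) (Fin e) K) * M) '' stdHereditaryOrder R K t e) ∧
      ((traceDualSubmodule R K t e ^ i : Submodule R (Matrix (Fin e) (Fin e) K)) :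
          Set (Matrix (Fin e) (Fin e) K))
        = {M : Matrix (Fin e) (Fin e) K | ∀ j k : Fin e,
            M j k ∈ Submodule.span R
              {(algebraMap R K t) ^
                (-(Int.fdiv ((k : ℤ) - (j : ℤ) + (i : ℤ) * ((e : ℤ) - 1)) (e : ℤ)))}} :=
  traceDual_pow_eq_general R K t ht e
end

section
/- For every natural number i, the set of scalars c ∈ K such that the scalar matrix c·Id lies in ω^i is exactly the R-submodule of K spanned by t^{−⌊i(e−1)/e⌋} (floor of the rational number i(e−1)/e); that is, the centralizer Z(ω^i) of the i-th power of the dualizing bimodule of the block hereditary order Δ equals the fractional ideal (t^{−⌊i(e−1)/e⌋}). -/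
/-!
The order `Δ` and its trace dual `ω` are lattices described entrywise by powers of `t`: the
`(u, v)` entry of `ω` ranges over `t⁻¹R` if `β u < β v` and over `R` otherwise (the exponents of
`Δ`, negated and transposed). A product of two
such lattices is again one, whose exponents are the min-plus product of the two exponent
matrices, the minimum being attained since `β` is surjective. By induction, the `(u, v)` entry of
`ω^i` (for `i ≥ 1`) ranges over `t^{-⌊(i(e-1) + β v - β u)/e⌋}R`, and on the diagonal this is the
claimed exponent.
-/

/-- The block hereditary order of ramification index `e` over a DVR `R` with
uniformizer `t`, with block assignment `β : Fin s → Fin e`: matrices whose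
`(i,j)` entry lies in `t·R` when `β j < β i` and in (the image of) `R`
otherwise. -/
def blockHereditaryOrder (R K : Type*) [CommRing R] [Field K] [Algebra R K]
    (t : R) (s e : ℕ) (β : Fin s → Fin e) : Set (Matrix (Fin s) (Fin s) K) :=
  {M | ∀ i j : Fin s,
    if β j < β i then ∃ r : R, algebraMap R K (t * r) = M i j
    else ∃ r : R, algebraMap R K r = M i j}

/-- The trace dual `ω` of the block hereditary order `Δ`, as an `R`-submodule of
the matrix algebra: matrices `M` with `trace (M * N)` in the image of `R` in `K`
for all `N ∈ Δ`. -/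
def blockTraceDual (R K : Type*) [CommRing R] [Field K] [Algebra R K]
    (t : R) (s e : ℕ) (β : Fin s → Fin e) : Submodule R (Matrix (Fin s) (Fin s) K) where
  carrier := {M | ∀ N ∈ blockHereditaryOrder R K t s e β,
    Matrix.trace (M * N) ∈ (1 : Submodule R K)}
  add_mem' := by
    intro a b ha hb N hN
    rw [Matrix.add_mul, Matrix.trace_add]
    exact add_mem (ha N hN) (hb N hN)
  zero_mem' := by intro N hN; simp
  smul_mem' := by
    intro r M hM N hN
    rw [Matrix.smul_mul, Matrix.trace_smul]
    exact Submodule.smul_mem _ _ (hM N hN)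

open Matrix

def traceDualPowExponent (e i a b : ℕ) : ℤ := -((i * (e - 1) + b - a : ℤ) / e)

theorem traceDualPowExponent_self (e i a : ℕ) :
    traceDualPowExponent e i a a = -Int.fdiv (i * (e - 1)) e := by
  rw [traceDualPowExponent, Int.fdiv_eq_ediv_of_nonneg _ (Int.natCast_nonneg e),
    add_sub_cancel_right]

theorem traceDualPowExponent_one {e a b : ℕ} (ha : a < e) (hb : b < e) :
    traceDualPowExponent e 1 a b = -if a < b then 1 else 0 := by
  have he : (0 : ℤ) < e := by omega
  rw [traceDualPowExponent, neg_inj]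
  split_ifs <;> rw [Int.ediv_eq_iff_of_pos he] <;> omega

theorem traceDualPowExponent_succ_le (e i a w b : ℕ) :
    traceDualPowExponent e (i + 1) a b ≤
      traceDualPowExponent e i a w + traceDualPowExponent e 1 w b := by
  obtain rfl | he := e.eq_zero_or_pos
  · simp [traceDualPowExponent]
  have h := Int.ediv_add_ediv_le_add_ediv (x := i * (e - 1) + w - a)
    (y := 1 * (e - 1) + b - w) (z := e) (by omega)
  rw [show (i * (e - 1) + w - a : ℤ) + (1 * (e - 1) + b - w) = ((i + 1 : ℕ) * (e - 1) + b - a)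
    by push_cast; ring] at h
  simp only [traceDualPowExponent, Nat.cast_one]
  omega

/-- At `w ≡ a + i (mod e)` the first numerator is divisible by `e`, so the floors add up
exactly. -/
theorem traceDualPowExponent_succ_eq (e i a b : ℕ) :
    traceDualPowExponent e (i + 1) a b =
      traceDualPowExponent e i a ((a + i) % e) + traceDualPowExponent e 1 ((a + i) % e) b := by
  have hdvd : (e : ℤ) ∣ i * (e - 1) + ((a + i) % e : ℕ) - a := by
    push_cast
    rw [Int.emod_def]
    exact ⟨i - (a + i) / e, by ring⟩
  simp only [traceDualPowExponent]
  rw [← neg_add, neg_inj, ← Int.add_ediv_of_dvd_left hdvd]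
  congr 1
  push_cast
  ring

theorem mul_mem_span_singleton_mul {R A : Type*} [CommSemiring R] [Semiring A] [Algebra R A]
    {p q x y : A} (hx : x ∈ Submodule.span R {p}) (hy : y ∈ Submodule.span R {q}) :
    x * y ∈ Submodule.span R {p * q} := by
  simpa [Submodule.span_mul_span] using Submodule.mul_mem_mul hx hy

section EntrywiseSpan

variable {R K n : Type*} [CommRing R] [Field K] [Algebra R K]

def entrywiseSpan (π : K) (E : n → n → ℤ) : Submodule R (Matrix n n K) where
  carrier := {M | ∀ u v, M u v ∈ Submodule.span R {π ^ E u v}}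
  add_mem' hM hN u v := add_mem (hM u v) (hN u v)
  zero_mem' _ _ := zero_mem _
  smul_mem' r _ hM u v := Submodule.smul_mem _ r (hM u v)

variable {t : R}

theorem zpow_mem_span_zpow (hπ : algebraMap R K t ≠ 0) {a b : ℤ} (h : b ≤ a) :
    algebraMap R K t ^ a ∈ Submodule.span R {algebraMap R K t ^ b} := by
  refine Submodule.mem_span_singleton.2 ⟨t ^ (a - b).toNat, ?_⟩
  rw [Algebra.smul_def, map_pow, ← zpow_natCast, Int.toNat_of_nonneg (by omega),
    ← zpow_add₀ hπ, sub_add_cancel]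

variable [DecidableEq n]

theorem single_zpow_mem_entrywiseSpan (hπ : algebraMap R K t ≠ 0) {E : n → n → ℤ} {u v : n}
    {z : ℤ} (hz : E u v ≤ z) :
    single u v (algebraMap R K t ^ z) ∈
      (entrywiseSpan (algebraMap R K t) E : Submodule R (Matrix n n K)) := by
  intro p q
  by_cases hpq : u = p ∧ v = q
  · obtain ⟨rfl, rfl⟩ := hpq
    simpa using zpow_mem_span_zpow hπ hz
  · simp [hpq]

variable [Fintype n]

theorem entrywiseSpan_mul_le (hπ : algebraMap R K t ≠ 0) {E F G : n → n → ℤ}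
    (h : ∀ u w v, G u v ≤ E u w + F w v) :
    (entrywiseSpan (algebraMap R K t) E * entrywiseSpan (algebraMap R K t) F :
        Submodule R (Matrix n n K)) ≤ entrywiseSpan (algebraMap R K t) G := by
  rw [Submodule.mul_le]
  intro M hM N hN u v
  rw [mul_apply]
  refine Submodule.sum_mem _ fun w _ => ?_
  have hMN := mul_mem_span_singleton_mul (hM u w) (hN w v)
  rw [← zpow_add₀ hπ] at hMN
  exact Submodule.span_le.2 (Set.singleton_subset_iff.2 (zpow_mem_span_zpow hπ (h u w v))) hMN

theorem entrywiseSpan_le_mul (hπ : algebraMap R K t ≠ 0) {E F G : n → n → ℤ}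
    (h : ∀ u v, ∃ w, E u w + F w v ≤ G u v) :
    (entrywiseSpan (algebraMap R K t) G : Submodule R (Matrix n n K)) ≤
      entrywiseSpan (algebraMap R K t) E * entrywiseSpan (algebraMap R K t) F := by
  intro M hM
  rw [matrix_eq_sum_single M]
  refine Submodule.sum_mem _ fun u _ => Submodule.sum_mem _ fun v _ => ?_
  obtain ⟨r, hr⟩ := Submodule.mem_span_singleton.1 (hM u v)
  obtain ⟨w, hw⟩ := h u v
  rw [← hr, ← smul_single, ← add_sub_cancel (E u w) (G u v), zpow_add₀ hπ,
    ← single_mul_single_same _ u w v]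
  exact Submodule.smul_mem _ _ (Submodule.mul_mem_mul
    (single_zpow_mem_entrywiseSpan hπ le_rfl) (single_zpow_mem_entrywiseSpan hπ (by omega)))

theorem scalar_mem_one_iff [Nonempty n] {c : K} :
    scalar n c ∈ (1 : Submodule R (Matrix n n K)) ↔ c ∈ (1 : Submodule R K) := by
  have h (y : R) : algebraMap R (Matrix n n K) y = scalar n (algebraMap R K y) := by
    ext u v
    simp [algebraMap_matrix_apply, scalar_apply, diagonal_apply]
  simp only [Submodule.mem_one, h, scalar_inj]

theorem scalar_mem_entrywiseSpan_iff [Nonempty n] {π c : K} {E : n → n → ℤ} {z : ℤ}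
    (hE : ∀ u, E u u = z) :
    scalar n c ∈ (entrywiseSpan π E : Submodule R (Matrix n n K)) ↔
      c ∈ Submodule.span R {π ^ z} := by
  refine ⟨fun h => ?_, fun h u v => ?_⟩
  · obtain ⟨u⟩ := ‹Nonempty n›
    simpa [hE] using h u u
  · by_cases huv : u = v
    · subst huv
      simpa [hE] using h
    · simp [huv]

theorem forall_trace_mul_mem_one_iff (hπ : algebraMap R K t ≠ 0) {E : n → n → ℤ}
    {M : Matrix n n K} :
    (∀ N ∈ (entrywiseSpan (algebraMap R K t) E : Submodule R (Matrix n n K)),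
        trace (M * N) ∈ (1 : Submodule R K)) ↔
      M ∈ (entrywiseSpan (algebraMap R K t) fun u v => -E v u : Submodule R (Matrix n n K)) := by
  rw [Submodule.one_eq_span, ← zpow_zero (algebraMap R K t)]
  constructor
  · intro h u v
    have huv := h _ (single_zpow_mem_entrywiseSpan (u := v) (v := u) hπ le_rfl)
    rw [trace_mul_single, op_smul_eq_mul] at huv
    have := mul_mem_span_singleton_mul huv
      (Submodule.mem_span_singleton_self (algebraMap R K t ^ (-E v u)))
    rwa [mul_assoc, ← zpow_add₀ hπ, ← zpow_add₀ hπ, add_neg_cancel, zpow_zero, mul_one,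
      zero_add] at this
  · intro hM N hN
    simp only [trace, diag, mul_apply]
    refine Submodule.sum_mem _ fun u _ => Submodule.sum_mem _ fun v _ => ?_
    have := mul_mem_span_singleton_mul (hM u v) (hN v u)
    rwa [← zpow_add₀ hπ, neg_add_cancel] at this

end EntrywiseSpan

section BlockHereditaryOrder

variable {R K : Type*} [CommRing R] [Field K] [Algebra R K] {t : R} {s e : ℕ}
  {β : Fin s → Fin e}

theorem blockHereditaryOrder_eq_entrywiseSpan :
    blockHereditaryOrder R K t s e β =
      ↑(entrywiseSpan (algebraMap R K t) (fun i j => if β j < β i then 1 else 0) :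
        Submodule R (Matrix (Fin s) (Fin s) K)) := by
  ext M
  refine forall₂_congr fun i j => ?_
  simp only [Submodule.mem_span_singleton, Algebra.smul_def]
  split_ifs <;> simp [mul_comm]

theorem blockTraceDual_eq_entrywiseSpan (hπ : algebraMap R K t ≠ 0) :
    blockTraceDual R K t s e β =
      entrywiseSpan (algebraMap R K t) fun u v => traceDualPowExponent e 1 (β u) (β v) := by
  have hexp : (fun u v => traceDualPowExponent e 1 (β u) (β v)) =
      fun u v => -if β u < β v then 1 else 0 := by
    funext u v
    simp [traceDualPowExponent_one]
  rw [hexp]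
  ext M
  show (∀ N ∈ blockHereditaryOrder R K t s e β, _) ↔ _
  rw [blockHereditaryOrder_eq_entrywiseSpan]
  exact forall_trace_mul_mem_one_iff hπ

theorem blockTraceDual_pow_succ (hπ : algebraMap R K t ≠ 0) (hsurj : Function.Surjective β)
    (i : ℕ) :
    blockTraceDual R K t s e β ^ (i + 1) =
      entrywiseSpan (algebraMap R K t) fun u v => traceDualPowExponent e (i + 1) (β u) (β v) := by
  induction i with
  | zero => rw [zero_add, pow_one, blockTraceDual_eq_entrywiseSpan hπ]
  | succ i ih =>
    rw [pow_succ, ih, blockTraceDual_eq_entrywiseSpan hπ]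
    refine le_antisymm
      (entrywiseSpan_mul_le hπ fun u w v => traceDualPowExponent_succ_le _ _ _ _ _)
      (entrywiseSpan_le_mul hπ fun u v => ?_)
    obtain ⟨w, hw⟩ := hsurj ⟨(β u + (i + 1)) % e, Nat.mod_lt _ (β u).pos⟩
    refine ⟨w, le_of_eq ?_⟩
    rw [hw]
    exact (traceDualPowExponent_succ_eq _ _ _ _).symm

end BlockHereditaryOrder

theorem centralizer_traceDual_pow_general (R K : Type*) [CommRing R] [IsDomain R]
    [IsDiscreteValuationRing R] [Field K] [Algebra R K] [IsFractionRing R K]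
    (t : R) (ht : Ideal.span {t} = IsLocalRing.maximalIdeal R)
    (s e : ℕ) (hs : 1 ≤ s)
    (β : Fin s → Fin e) (hsurj : Function.Surjective β) :
    ∀ i : ℕ,
      {c : K | Matrix.scalar (Fin s) c ∈
          (blockTraceDual R K t s e β ^ i : Submodule R (Matrix (Fin s) (Fin s) K))}
        = (Submodule.span R
            {(algebraMap R K t) ^ (-(Int.fdiv ((i : ℤ) * ((e : ℤ) - 1)) (e : ℤ)))} :
            Submodule R K) := by
  have ht0 : t ≠ 0 := by
    rintro rfl
    exact IsDiscreteValuationRing.not_a_field R (by rw [← ht, Ideal.span_singleton_eq_bot])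
  have hπ : algebraMap R K t ≠ 0 := (map_ne_zero_iff _ (IsFractionRing.injective R K)).2 ht0
  have : Nonempty (Fin s) := ⟨⟨0, hs⟩⟩
  rintro (_ | i)
  · ext c
    rw [pow_zero, Nat.cast_zero, zero_mul, Int.zero_fdiv, neg_zero, zpow_zero,
      ← Submodule.one_eq_span]
    exact scalar_mem_one_iff
  · ext c
    show _ ∈ _ ↔ _
    rw [blockTraceDual_pow_succ hπ hsurj i]
    exact scalar_mem_entrywiseSpan_iff fun u => traceDualPowExponent_self _ _ _

/-- For every natural number `i`, the centralizer of `ω^i`, i.e. the set of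
scalars `c ∈ K` whose scalar matrix `c · Id` lies in the `i`-th power of the
trace dual of the block hereditary order, is the fractional ideal
`(t ^ (-⌊i(e-1)/e⌋))`. -/
theorem centralizer_traceDual_pow (R K : Type*) [CommRing R] [IsDomain R]
    [IsDiscreteValuationRing R] [Field K] [Algebra R K] [IsFractionRing R K]
    (t : R) (ht : Ideal.span {t} = IsLocalRing.maximalIdeal R)
    (s e : ℕ) (hs : 1 ≤ s) (he : 1 ≤ e)
    (β : Fin s → Fin e) (hmono : Monotone β) (hsurj : Function.Surjective β) :
    ∀ i : ℕ,
      {c : K | Matrix.scalar (Fin s) c ∈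
          (blockTraceDual R K t s e β ^ i : Submodule R (Matrix (Fin s) (Fin s) K))}
        = (Submodule.span R
            {(algebraMap R K t) ^ (-(Int.fdiv ((i : ℤ) * ((e : ℤ) - 1)) (e : ℤ)))} :
            Submodule R K) :=
  centralizer_traceDual_pow_general R K t ht s e hs β hsurj
end

section
/- Assume the characteristic of k is not 2. The fixed subalgebra {x ∈ R : σ(x) = x} of the k-algebra automorphism σ of R = k[a,b,c,d]/(ad − bc) is equal to the k-subalgebra of R generated by a², ab, b², c, d. -/
open MvPolynomial

/-- `R = k[a,b,c,d]/(ad - bc)`. -/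
abbrev ConeRing (k : Type*) [Field k] : Type _ :=
  MvPolynomial (Fin 4) k ⧸
    Ideal.span {(X 0 * X 3 - X 1 * X 2 : MvPolynomial (Fin 4) k)}

/-- The images of the variables `a, b, c, d` in `R = k[a,b,c,d]/(ad - bc)`. -/
noncomputable def coneGen (k : Type*) [Field k] (i : Fin 4) : ConeRing k :=
  Ideal.Quotient.mk _ (X i)

/-- The sign automorphism at the polynomial level. -/
noncomputable def tauCone (k : Type*) [Field k] :
    MvPolynomial (Fin 4) k →ₐ[k] MvPolynomial (Fin 4) k :=
  aeval ![-X 0, -X 1, X 2, X 3]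

lemma tauCone_monomial (k : Type*) [Field k] (m : Fin 4 →₀ ℕ) (c : k) :
    tauCone k (monomial m c) = (-1) ^ (m 0 + m 1) * monomial m c := by
  rw [tauCone, aeval_monomial, monomial_eq, Finsupp.prod_pow, Finsupp.prod_pow,
    Fin.prod_univ_four, Fin.prod_univ_four]
  simp only [Matrix.cons_val_zero, Matrix.cons_val_one, Matrix.head_cons,
    Matrix.cons_val_two, Matrix.tail_cons, Matrix.cons_val_three]
  rw [neg_pow, neg_pow, algebraMap_eq]
  ring

/-- The even subalgebra of the polynomial ring. -/
noncomputable def evenSub (k : Type*) [Field k] : Subalgebra k (MvPolynomial (Fin 4) k) :=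
  Algebra.adjoin k {X 0 ^ 2, X 0 * X 1, X 1 ^ 2, X 2, X 3}

lemma pow_mul_pow_mem (k : Type*) [Field k] (m0 m1 : ℕ) (h : Even (m0 + m1)) :
    (X 0 : MvPolynomial (Fin 4) k) ^ m0 * X 1 ^ m1 ∈ evenSub k := by
  have hsq0 : (X 0 : MvPolynomial (Fin 4) k) ^ 2 ∈ evenSub k :=
    Algebra.subset_adjoin (by simp)
  have hsq1 : (X 1 : MvPolynomial (Fin 4) k) ^ 2 ∈ evenSub k :=
    Algebra.subset_adjoin (by simp)
  have hmul : (X 0 : MvPolynomial (Fin 4) k) * X 1 ∈ evenSub k :=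
    Algebra.subset_adjoin (by simp)
  rcases Nat.even_or_odd m0 with h0 | h0
  · have h1 : Even m1 := by
      rcases Nat.even_add.mp h with ⟨hiff⟩
      exact (Nat.even_add.mp h).mp h0
    obtain ⟨p, hp⟩ := h0
    obtain ⟨q, hq⟩ := h1
    have : (X 0 : MvPolynomial (Fin 4) k) ^ m0 * X 1 ^ m1
        = (X 0 ^ 2) ^ p * (X 1 ^ 2) ^ q := by
      rw [hp, hq]; ring
    rw [this]
    exact mul_mem (pow_mem hsq0 p) (pow_mem hsq1 q)
  · have h1 : Odd m1 := by
      rcases Nat.even_or_odd m1 with h1 | h1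
      · exfalso
        exact (Nat.odd_add.mp (by simpa [Nat.add_comm] using h.add_one ) ) |> fun _ => by
          exact absurd ((Nat.even_add.mp h).mpr h1) (Nat.not_even_iff_odd.mpr h0)
      · exact h1
    obtain ⟨p, hp⟩ := h0
    obtain ⟨q, hq⟩ := h1
    have : (X 0 : MvPolynomial (Fin 4) k) ^ m0 * X 1 ^ m1
        = (X 0 * X 1) * ((X 0 ^ 2) ^ p * (X 1 ^ 2) ^ q) := by
      rw [hp, hq]; ring
    rw [this]
    exact mul_mem hmul (mul_mem (pow_mem hsq0 p) (pow_mem hsq1 q))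

lemma even_monomial_mem (k : Type*) [Field k] (m : Fin 4 →₀ ℕ) (c : k)
    (h : Even (m 0 + m 1)) : monomial m c ∈ evenSub k := by
  rw [monomial_eq, Finsupp.prod_pow, Fin.prod_univ_four]
  have h2 : (X 2 : MvPolynomial (Fin 4) k) ∈ evenSub k :=
    Algebra.subset_adjoin (by simp)
  have h3 : (X 3 : MvPolynomial (Fin 4) k) ∈ evenSub k :=
    Algebra.subset_adjoin (by simp)
  have hC : (C c : MvPolynomial (Fin 4) k) ∈ evenSub k := by
    rw [← algebraMap_eq]; exact Subalgebra.algebraMap_mem _ c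
  have := pow_mul_pow_mem k (m 0) (m 1) h
  exact mul_mem hC (mul_mem (mul_mem this (pow_mem h2 _)) (pow_mem h3 _))

lemma add_tau_mem (k : Type*) [Field k] (P : MvPolynomial (Fin 4) k) :
    P + tauCone k P ∈ evenSub k := by
  induction P using MvPolynomial.induction_on' with
  | monomial m c =>
    rw [tauCone_monomial]
    rcases Nat.even_or_odd (m 0 + m 1) with h | h
    · rw [h.neg_one_pow, one_mul]
      exact add_mem (even_monomial_mem k m c h) (even_monomial_mem k m c h)
    · rw [h.neg_one_pow, neg_one_mul, add_neg_cancel]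
      exact zero_mem _
  | add p q hp hq =>
    have : p + q + tauCone k (p + q) = (p + tauCone k p) + (q + tauCone k q) := by
      rw [map_add]; ring
    rw [this]
    exact add_mem hp hq

/-- If `char k ≠ 2`, the fixed subalgebra of the automorphism `σ` of
`R = k[a,b,c,d]/(ad - bc)` with `σ(a) = -a`, `σ(b) = -b`, `σ(c) = c`,
`σ(d) = d` is the `k`-subalgebra generated by `a², ab, b², c, d`. -/
theorem fixed_subalgebra_eq_adjoin (k : Type*) [Field k] (hchar : ringChar k ≠ 2)
    (σ : ConeRing k ≃ₐ[k] ConeRing k)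
    (ha : σ (coneGen k 0) = -coneGen k 0) (hb : σ (coneGen k 1) = -coneGen k 1)
    (hc : σ (coneGen k 2) = coneGen k 2) (hd : σ (coneGen k 3) = coneGen k 3) :
    {x : ConeRing k | σ x = x}
      = (Algebra.adjoin k
          {coneGen k 0 ^ 2, coneGen k 0 * coneGen k 1, coneGen k 1 ^ 2,
            coneGen k 2, coneGen k 3} : Set (ConeRing k)) := by
  have h2 : (2 : k) ≠ 0 := Ring.two_ne_zero hchar
  set I : Ideal (MvPolynomial (Fin 4) k) :=
    Ideal.span {(X 0 * X 3 - X 1 * X 2 : MvPolynomial (Fin 4) k)} with hI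
  set M : Subalgebra k (ConeRing k) :=
    Algebra.adjoin k {coneGen k 0 ^ 2, coneGen k 0 * coneGen k 1, coneGen k 1 ^ 2,
      coneGen k 2, coneGen k 3} with hM
  -- the commuting square σ ∘ mk = mk ∘ τ
  have key : ∀ P : MvPolynomial (Fin 4) k,
      σ (Ideal.Quotient.mkₐ k I P) = Ideal.Quotient.mkₐ k I (tauCone k P) := by
    have : σ.toAlgHom.comp (Ideal.Quotient.mkₐ k I) =
        (Ideal.Quotient.mkₐ k I).comp (tauCone k) := by
      apply MvPolynomial.algHom_ext
      intro i
      fin_cases i <;>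
        simp [tauCone, coneGen, Ideal.Quotient.mkₐ_eq_mk, ha, hb, hc, hd] <;>
        first | exact ha | exact hb | exact hc | exact hd
    intro P
    exact congrFun (congrArg DFunLike.coe this) P
  -- σ fixes every element of M
  have hMfix : ∀ x ∈ M, σ x = x := by
    have hle : M ≤ AlgHom.equalizer σ.toAlgHom (AlgHom.id k (ConeRing k)) := by
      rw [hM]
      apply Algebra.adjoin_le
      rintro x hx
      simp only [Set.mem_insert_iff, Set.mem_singleton_iff] at hx
      rcases hx with rfl | rfl | rfl | rfl | rfl <;>
        refine SetLike.mem_coe.mpr ((AlgHom.mem_equalizer _ _ _).mpr ?_) <;>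
        simp only [AlgEquiv.toAlgHom_eq_coe, AlgHom.coe_coe, AlgEquiv.coe_algHom, AlgHom.id_apply,
          map_pow, map_mul, ha, hb, hc, hd] <;> ring
    intro x hx
    exact hle hx
  ext x
  simp only [Set.mem_setOf_eq, SetLike.mem_coe]
  constructor
  · intro hσ
    obtain ⟨P, hP⟩ := Ideal.Quotient.mkₐ_surjective k I x
    have hx2 : x + x = Ideal.Quotient.mkₐ k I (P + tauCone k P) := by
      rw [map_add, hP, ← key P, hP, hσ]
    have hmem : Ideal.Quotient.mkₐ k I (P + tauCone k P) ∈ M := by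
      have h' : Ideal.Quotient.mkₐ k I (P + tauCone k P) ∈
          (evenSub k).map (Ideal.Quotient.mkₐ k I) := ⟨_, add_tau_mem k P, rfl⟩
      rw [evenSub, AlgHom.map_adjoin] at h'
      refine Algebra.adjoin_le ?_ h'
      rintro y ⟨p, hp, rfl⟩
      simp only [Set.mem_insert_iff, Set.mem_singleton_iff] at hp
      rcases hp with rfl | rfl | rfl | rfl | rfl
      · have e : Ideal.Quotient.mkₐ k I (X 0 ^ 2) = coneGen k 0 ^ 2 := by
          simp [coneGen, Ideal.Quotient.mkₐ_eq_mk]; rfl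
        rw [e]; exact Algebra.subset_adjoin (Set.mem_insert _ _)
      · have e : Ideal.Quotient.mkₐ k I (X 0 * X 1) = coneGen k 0 * coneGen k 1 := by
          simp [coneGen, Ideal.Quotient.mkₐ_eq_mk]; rfl
        rw [e]; exact Algebra.subset_adjoin (Set.mem_insert_of_mem _ (Set.mem_insert _ _))
      · have e : Ideal.Quotient.mkₐ k I (X 1 ^ 2) = coneGen k 1 ^ 2 := by
          simp [coneGen, Ideal.Quotient.mkₐ_eq_mk]; rfl
        rw [e]; exact Algebra.subset_adjoin (Set.mem_insert_of_mem _ (Set.mem_insert_of_mem _ (Set.mem_insert _ _)))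
      · have e : Ideal.Quotient.mkₐ k I (X 2) = coneGen k 2 := by
          simp [coneGen, Ideal.Quotient.mkₐ_eq_mk]; rfl
        rw [e]; exact Algebra.subset_adjoin (Set.mem_insert_of_mem _ (Set.mem_insert_of_mem _ (Set.mem_insert_of_mem _ (Set.mem_insert _ _))))
      · have e : Ideal.Quotient.mkₐ k I (X 3) = coneGen k 3 := by
          simp [coneGen, Ideal.Quotient.mkₐ_eq_mk]; rfl
        rw [e]; exact Algebra.subset_adjoin (Set.mem_insert_of_mem _ (Set.mem_insert_of_mem _ (Set.mem_insert_of_mem _ (Set.mem_insert_of_mem _ (Set.mem_singleton _)))))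
    have hxeq : x = (2⁻¹ : k) • Ideal.Quotient.mkₐ k I (P + tauCone k P) := by
      rw [← hx2, ← two_smul k x, smul_smul, inv_mul_cancel₀ h2, one_smul]
    rw [hxeq]
    exact Subalgebra.smul_mem M hmem _
  · intro hx
    exact hMfix x hx
end

section
/- There is an isomorphism of k-algebras from k[x,y,z,u,v]/(xz − y², xv − yu, yv − zu) onto the k-subalgebra of R = k[a,b,c,d]/(ad − bc) generated by a², ab, b², c, d, sending x ↦ a², y ↦ ab, z ↦ b², u ↦ c, v ↦ d. -/
open MvPolynomial

/-- `k[x,y,z,u,v]/(xz - y², xv - yu, yv - zu)`. -/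
abbrev FranciaRing (k : Type*) [Field k] : Type _ :=
  MvPolynomial (Fin 5) k ⧸
    Ideal.span {(X 0 * X 2 - X 1 ^ 2 : MvPolynomial (Fin 5) k),
      X 0 * X 4 - X 1 * X 3, X 1 * X 4 - X 2 * X 3}

section FranciaAux
open Finsupp

variable {k : Type*} [Field k]

noncomputable def sig5 (μ : Fin 5 →₀ ℕ) : Fin 3 →₀ ℕ :=
  Finsupp.single 0 (2 * μ 0 + μ 1 + μ 3) + Finsupp.single 1 (μ 1 + 2 * μ 2 + μ 4)
    + Finsupp.single 2 (μ 3 + μ 4)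

noncomputable def sig4 (μ : Fin 4 →₀ ℕ) : Fin 3 →₀ ℕ :=
  Finsupp.single 0 (μ 0 + μ 2) + Finsupp.single 1 (μ 1 + μ 3)
    + Finsupp.single 2 (μ 2 + μ 3)

lemma sig5_apply (μ : Fin 5 →₀ ℕ) :
    sig5 μ 0 = 2 * μ 0 + μ 1 + μ 3 ∧ sig5 μ 1 = μ 1 + 2 * μ 2 + μ 4 ∧
      sig5 μ 2 = μ 3 + μ 4 := by
  refine ⟨?_, ?_, ?_⟩ <;> simp [sig5, Finsupp.single_apply]

noncomputable def Phi5 : MvPolynomial (Fin 5) k →ₐ[k] MvPolynomial (Fin 3) k :=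
  aeval ![X 0 ^ 2, X 0 * X 1, X 1 ^ 2, X 0 * X 2, X 1 * X 2]

noncomputable def Phi4 : MvPolynomial (Fin 4) k →ₐ[k] MvPolynomial (Fin 3) k :=
  aeval ![X 0, X 1, X 0 * X 2, X 1 * X 2]

lemma Phi5_monomial (μ : Fin 5 →₀ ℕ) (c : k) :
    Phi5 (monomial μ c) = monomial (sig5 μ) c := by
  rw [Phi5, aeval_monomial, monomial_eq]
  rw [Finsupp.prod_pow, Finsupp.prod_pow]
  rw [Fin.prod_univ_five, Fin.prod_univ_three]
  simp only [Matrix.cons_val_zero, Matrix.cons_val_one, Matrix.head_cons,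
    Matrix.cons_val_two, Matrix.tail_cons, Matrix.cons_val_three, Matrix.cons_val_four]
  rw [(sig5_apply μ).1, (sig5_apply μ).2.1, (sig5_apply μ).2.2]
  rw [algebraMap_eq]
  ring

lemma Phi4_monomial (μ : Fin 4 →₀ ℕ) (c : k) :
    Phi4 (monomial μ c) = monomial (sig4 μ) c := by
  rw [Phi4, aeval_monomial, monomial_eq]
  rw [Finsupp.prod_pow, Finsupp.prod_pow]
  rw [Fin.prod_univ_four, Fin.prod_univ_three]
  simp only [Matrix.cons_val_zero, Matrix.cons_val_one, Matrix.head_cons,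
    Matrix.cons_val_two, Matrix.tail_cons, Matrix.cons_val_three]
  have h0 : sig4 μ 0 = μ 0 + μ 2 := by simp [sig4, Finsupp.single_apply]
  have h1 : sig4 μ 1 = μ 1 + μ 3 := by simp [sig4, Finsupp.single_apply]
  have h2 : sig4 μ 2 = μ 2 + μ 3 := by simp [sig4, Finsupp.single_apply]
  rw [h0, h1, h2, algebraMap_eq]
  ring

def Std5 (μ : Fin 5 →₀ ℕ) : Prop :=
  (μ 0 = 0 ∨ μ 2 = 0) ∧ (μ 0 = 0 ∨ μ 4 = 0) ∧ (μ 1 = 0 ∨ μ 4 = 0)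

def Std4 (μ : Fin 4 →₀ ℕ) : Prop := μ 0 = 0 ∨ μ 3 = 0

lemma sig5_injOn {μ ν : Fin 5 →₀ ℕ} (hμ : Std5 μ) (hν : Std5 ν)
    (h : sig5 μ = sig5 ν) : μ = ν := by
  have e0 := congrArg (fun f => f 0) h
  have e1 := congrArg (fun f => f 1) h
  have e2 := congrArg (fun f => f 2) h
  simp [sig5, Finsupp.single_apply, Fin.ext_iff] at e0 e1 e2
  obtain ⟨a1, a2, a3⟩ := hμ
  obtain ⟨b1, b2, b3⟩ := hν
  have h0 : μ 0 = ν 0 := by omega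
  have h1 : μ 1 = ν 1 := by omega
  have h2 : μ 2 = ν 2 := by omega
  have h3 : μ 3 = ν 3 := by omega
  have h4 : μ 4 = ν 4 := by omega
  ext i
  fin_cases i <;> assumption

lemma sig4_injOn {μ ν : Fin 4 →₀ ℕ} (hμ : Std4 μ) (hν : Std4 ν)
    (h : sig4 μ = sig4 ν) : μ = ν := by
  have e0 := congrArg (fun f => f 0) h
  have e1 := congrArg (fun f => f 1) h
  have e2 := congrArg (fun f => f 2) h
  simp [sig4, Finsupp.single_apply, Fin.ext_iff] at e0 e1 e2
  unfold Std4 at hμ hν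
  have h0 : μ 0 = ν 0 := by omega
  have h1 : μ 1 = ν 1 := by omega
  have h2 : μ 2 = ν 2 := by omega
  have h3 : μ 3 = ν 3 := by omega
  ext i
  fin_cases i <;> assumption

lemma phi5_eq_zero {r : MvPolynomial (Fin 5) k}
    (hs : ∀ μ ∈ r.support, Std5 μ) (h : Phi5 r = 0) : r = 0 := by
  by_contra hr
  obtain ⟨μ₀, hμ₀⟩ := Finset.nonempty_iff_ne_empty.mpr
    (fun he => hr (MvPolynomial.support_eq_empty.mp he))
  have key : coeff (sig5 μ₀) (Phi5 r) = coeff μ₀ r := by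
    conv_lhs => rw [r.as_sum, map_sum]
    simp only [Phi5_monomial]
    rw [coeff_sum]
    simp only [coeff_monomial]
    rw [Finset.sum_eq_single μ₀]
    · simp
    · intro ν hν hne
      rw [if_neg]
      exact fun hsig => hne (sig5_injOn (hs ν hν) (hs μ₀ hμ₀) hsig)
    · intro hn; exact absurd hμ₀ hn
  rw [h] at key
  simp at key
  exact (MvPolynomial.mem_support_iff.mp hμ₀) key.symm

lemma phi4_eq_zero {r : MvPolynomial (Fin 4) k}
    (hs : ∀ μ ∈ r.support, Std4 μ) (h : Phi4 r = 0) : r = 0 := by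
  by_contra hr
  obtain ⟨μ₀, hμ₀⟩ := Finset.nonempty_iff_ne_empty.mpr
    (fun he => hr (MvPolynomial.support_eq_empty.mp he))
  have key : coeff (sig4 μ₀) (Phi4 r) = coeff μ₀ r := by
    conv_lhs => rw [r.as_sum, map_sum]
    simp only [Phi4_monomial]
    rw [coeff_sum]
    simp only [coeff_monomial]
    rw [Finset.sum_eq_single μ₀]
    · simp
    · intro ν hν hne
      rw [if_neg]
      exact fun hsig => hne (sig4_injOn (hs ν hν) (hs μ₀ hμ₀) hsig)
    · intro hn; exact absurd hμ₀ hn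
  rw [h] at key
  simp at key
  exact (MvPolynomial.mem_support_iff.mp hμ₀) key.symm

noncomputable def I5 (k : Type*) [Field k] : Ideal (MvPolynomial (Fin 5) k) :=
  Ideal.span {(X 0 * X 2 - X 1 ^ 2 : MvPolynomial (Fin 5) k),
      X 0 * X 4 - X 1 * X 3, X 1 * X 4 - X 2 * X 3}

lemma step_mem {n : ℕ} (I : Ideal (MvPolynomial (Fin n) k))
    {g : MvPolynomial (Fin n) k} (hg : g ∈ I) {p q μ : Fin n →₀ ℕ}
    (hgf : g = monomial p 1 - monomial q 1) (hle : p ≤ μ) :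
    monomial μ (1:k) - monomial (μ - p + q) 1 ∈ I := by
  have h := I.mul_mem_left (monomial (μ - p) 1) hg
  rw [hgf, mul_sub, monomial_mul, monomial_mul, mul_one,
    tsub_add_cancel_of_le hle] at h
  exact h

lemma XX_eq {n : ℕ} (i j : Fin n) :
    (X i * X j : MvPolynomial (Fin n) k)
      = monomial (Finsupp.single i 1 + Finsupp.single j 1) 1 := by
  rw [monomial_add_single, ← X_pow_eq_monomial, pow_one, pow_one]

lemma reduce5 : ∀ (m : ℕ) (μ : Fin 5 →₀ ℕ), 4 ^ μ 0 * (μ 1 + 2) ≤ m →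
    ∃ ν, Std5 ν ∧ sig5 ν = sig5 μ ∧ monomial μ (1:k) - monomial ν 1 ∈ I5 k := by
  intro m
  induction m using Nat.strong_induction_on with
  | _ m ih =>
  intro μ hμ
  by_cases hA : μ 0 ≠ 0 ∧ μ 2 ≠ 0
  · set p := Finsupp.single (0 : Fin 5) 1 + Finsupp.single 2 1 with hp
    set q := Finsupp.single (1 : Fin 5) 2 with hq
    set μ' := μ - p + q with hμ'
    have hle : p ≤ μ := by
      rw [Finsupp.le_iff]
      intro i _
      fin_cases i <;> simp [hp, Finsupp.single_apply] <;> omega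
    have c : ∀ i : Fin 5, μ' i = μ i - p i + q i := by
      intro i; simp [hμ', Finsupp.sub_apply]
    have c0 : μ' 0 = μ 0 - 1 := by rw [c 0]; simp [hp, hq, Finsupp.single_apply]
    have c1 : μ' 1 = μ 1 + 2 := by rw [c 1]; simp [hp, hq, Finsupp.single_apply]
    have c2 : μ' 2 = μ 2 - 1 := by rw [c 2]; simp [hp, hq, Finsupp.single_apply]
    have c3 : μ' 3 = μ 3 := by rw [c 3]; simp [hp, hq, Finsupp.single_apply]
    have c4 : μ' 4 = μ 4 := by rw [c 4]; simp [hp, hq, Finsupp.single_apply]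
    have hmeas : 4 ^ μ' 0 * (μ' 1 + 2) < m := by
      refine lt_of_lt_of_le ?_ hμ
      rw [c0, c1]
      have h4 : 4 ^ μ 0 = 4 ^ (μ 0 - 1) * 4 := by
        rw [← pow_succ]; congr 1; omega
      rw [h4]
      have hpow : 1 ≤ 4 ^ (μ 0 - 1) := Nat.one_le_pow _ _ (by norm_num)
      nlinarith [hpow]
    obtain ⟨ν, hν1, hν2, hν3⟩ := ih _ hmeas μ' le_rfl
    refine ⟨ν, hν1, ?_, ?_⟩
    · rw [hν2]
      unfold sig5
      have e1 : 2 * μ' 0 + μ' 1 + μ' 3 = 2 * μ 0 + μ 1 + μ 3 := by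
        rw [c0, c1, c3]; omega
      have e2 : μ' 1 + 2 * μ' 2 + μ' 4 = μ 1 + 2 * μ 2 + μ 4 := by
        rw [c1, c2, c4]; omega
      have e3 : μ' 3 + μ' 4 = μ 3 + μ 4 := by rw [c3, c4]
      rw [e1, e2, e3]
    · have hgI : (X 0 * X 2 - X 1 ^ 2 : MvPolynomial (Fin 5) k) ∈ I5 k :=
        Ideal.subset_span (Set.mem_insert _ _)
      have hgf : (X 0 * X 2 - X 1 ^ 2 : MvPolynomial (Fin 5) k)
          = monomial p 1 - monomial q 1 := by
        rw [XX_eq, X_pow_eq_monomial, hp, hq]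
      have hmem : monomial μ (1:k) - monomial μ' 1 ∈ I5 k :=
        step_mem _ hgI hgf hle
      have := (I5 k).add_mem hmem hν3
      simpa using this
  by_cases hB : μ 0 ≠ 0 ∧ μ 4 ≠ 0
  · set p := Finsupp.single (0 : Fin 5) 1 + Finsupp.single 4 1 with hp
    set q := Finsupp.single (1 : Fin 5) 1 + Finsupp.single 3 1 with hq
    set μ' := μ - p + q with hμ'
    have hle : p ≤ μ := by
      rw [Finsupp.le_iff]
      intro i _
      fin_cases i <;> simp [hp, Finsupp.single_apply] <;> omega
    have c : ∀ i : Fin 5, μ' i = μ i - p i + q i := by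
      intro i; simp [hμ', Finsupp.sub_apply]
    have c0 : μ' 0 = μ 0 - 1 := by rw [c 0]; simp [hp, hq, Finsupp.single_apply]
    have c1 : μ' 1 = μ 1 + 1 := by rw [c 1]; simp [hp, hq, Finsupp.single_apply]
    have c2 : μ' 2 = μ 2 := by rw [c 2]; simp [hp, hq, Finsupp.single_apply]
    have c3 : μ' 3 = μ 3 + 1 := by rw [c 3]; simp [hp, hq, Finsupp.single_apply]
    have c4 : μ' 4 = μ 4 - 1 := by rw [c 4]; simp [hp, hq, Finsupp.single_apply]
    have hmeas : 4 ^ μ' 0 * (μ' 1 + 2) < m := by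
      refine lt_of_lt_of_le ?_ hμ
      rw [c0, c1]
      have h4 : 4 ^ μ 0 = 4 ^ (μ 0 - 1) * 4 := by
        rw [← pow_succ]; congr 1; omega
      rw [h4]
      have hpow : 1 ≤ 4 ^ (μ 0 - 1) := Nat.one_le_pow _ _ (by norm_num)
      nlinarith [hpow]
    obtain ⟨ν, hν1, hν2, hν3⟩ := ih _ hmeas μ' le_rfl
    refine ⟨ν, hν1, ?_, ?_⟩
    · rw [hν2]
      unfold sig5
      have e1 : 2 * μ' 0 + μ' 1 + μ' 3 = 2 * μ 0 + μ 1 + μ 3 := by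
        rw [c0, c1, c3]; omega
      have e2 : μ' 1 + 2 * μ' 2 + μ' 4 = μ 1 + 2 * μ 2 + μ 4 := by
        rw [c1, c2, c4]; omega
      have e3 : μ' 3 + μ' 4 = μ 3 + μ 4 := by rw [c3, c4]; omega
      rw [e1, e2, e3]
    · have hgI : (X 0 * X 4 - X 1 * X 3 : MvPolynomial (Fin 5) k) ∈ I5 k :=
        Ideal.subset_span (Set.mem_insert_of_mem _ (Set.mem_insert _ _))
      have hgf : (X 0 * X 4 - X 1 * X 3 : MvPolynomial (Fin 5) k)
          = monomial p 1 - monomial q 1 := by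
        rw [XX_eq, XX_eq, hp, hq]
      have hmem : monomial μ (1:k) - monomial μ' 1 ∈ I5 k :=
        step_mem _ hgI hgf hle
      have := (I5 k).add_mem hmem hν3
      simpa using this
  by_cases hC : μ 1 ≠ 0 ∧ μ 4 ≠ 0
  · set p := Finsupp.single (1 : Fin 5) 1 + Finsupp.single 4 1 with hp
    set q := Finsupp.single (2 : Fin 5) 1 + Finsupp.single 3 1 with hq
    set μ' := μ - p + q with hμ'
    have hle : p ≤ μ := by
      rw [Finsupp.le_iff]
      intro i _
      fin_cases i <;> simp [hp, Finsupp.single_apply] <;> omega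
    have c : ∀ i : Fin 5, μ' i = μ i - p i + q i := by
      intro i; simp [hμ', Finsupp.sub_apply]
    have c0 : μ' 0 = μ 0 := by rw [c 0]; simp [hp, hq, Finsupp.single_apply]
    have c1 : μ' 1 = μ 1 - 1 := by rw [c 1]; simp [hp, hq, Finsupp.single_apply]
    have c2 : μ' 2 = μ 2 + 1 := by rw [c 2]; simp [hp, hq, Finsupp.single_apply]
    have c3 : μ' 3 = μ 3 + 1 := by rw [c 3]; simp [hp, hq, Finsupp.single_apply]
    have c4 : μ' 4 = μ 4 - 1 := by rw [c 4]; simp [hp, hq, Finsupp.single_apply]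
    have hmeas : 4 ^ μ' 0 * (μ' 1 + 2) < m := by
      refine lt_of_lt_of_le ?_ hμ
      rw [c0, c1]
      have hpow : 0 < 4 ^ μ 0 := Nat.pow_pos (by norm_num)
      have h2 : μ 1 - 1 + 2 < μ 1 + 2 := by omega
      exact mul_lt_mul_of_pos_left h2 hpow
    obtain ⟨ν, hν1, hν2, hν3⟩ := ih _ hmeas μ' le_rfl
    refine ⟨ν, hν1, ?_, ?_⟩
    · rw [hν2]
      unfold sig5
      have e1 : 2 * μ' 0 + μ' 1 + μ' 3 = 2 * μ 0 + μ 1 + μ 3 := by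
        rw [c0, c1, c3]; omega
      have e2 : μ' 1 + 2 * μ' 2 + μ' 4 = μ 1 + 2 * μ 2 + μ 4 := by
        rw [c1, c2, c4]; omega
      have e3 : μ' 3 + μ' 4 = μ 3 + μ 4 := by rw [c3, c4]; omega
      rw [e1, e2, e3]
    · have hgI : (X 1 * X 4 - X 2 * X 3 : MvPolynomial (Fin 5) k) ∈ I5 k :=
        Ideal.subset_span
          (Set.mem_insert_of_mem _ (Set.mem_insert_of_mem _ rfl))
      have hgf : (X 1 * X 4 - X 2 * X 3 : MvPolynomial (Fin 5) k)
          = monomial p 1 - monomial q 1 := by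
        rw [XX_eq, XX_eq, hp, hq]
      have hmem : monomial μ (1:k) - monomial μ' 1 ∈ I5 k :=
        step_mem _ hgI hgf hle
      have := (I5 k).add_mem hmem hν3
      simpa using this
  · refine ⟨μ, ?_, rfl, by simp [(I5 k).zero_mem]⟩
    unfold Std5
    push_neg at hA hB hC
    omega

noncomputable def I4 (k : Type*) [Field k] : Ideal (MvPolynomial (Fin 4) k) :=
  Ideal.span {(X 0 * X 3 - X 1 * X 2 : MvPolynomial (Fin 4) k)}

lemma reduce4 : ∀ (m : ℕ) (μ : Fin 4 →₀ ℕ), μ 0 ≤ m →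
    ∃ ν, Std4 ν ∧ sig4 ν = sig4 μ ∧ monomial μ (1:k) - monomial ν 1 ∈ I4 k := by
  intro m
  induction m using Nat.strong_induction_on with
  | _ m ih =>
  intro μ hμ
  by_cases hA : μ 0 ≠ 0 ∧ μ 3 ≠ 0
  · set p := Finsupp.single (0 : Fin 4) 1 + Finsupp.single 3 1 with hp
    set q := Finsupp.single (1 : Fin 4) 1 + Finsupp.single 2 1 with hq
    set μ' := μ - p + q with hμ'
    have hle : p ≤ μ := by
      rw [Finsupp.le_iff]
      intro i _
      fin_cases i <;> simp [hp, Finsupp.single_apply] <;> omega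
    have c : ∀ i : Fin 4, μ' i = μ i - p i + q i := by
      intro i; simp [hμ', Finsupp.sub_apply]
    have c0 : μ' 0 = μ 0 - 1 := by rw [c 0]; simp [hp, hq, Finsupp.single_apply]
    have c1 : μ' 1 = μ 1 + 1 := by rw [c 1]; simp [hp, hq, Finsupp.single_apply]
    have c2 : μ' 2 = μ 2 + 1 := by rw [c 2]; simp [hp, hq, Finsupp.single_apply]
    have c3 : μ' 3 = μ 3 - 1 := by rw [c 3]; simp [hp, hq, Finsupp.single_apply]
    have hmeas : μ' 0 < m := by rw [c0]; omega
    obtain ⟨ν, hν1, hν2, hν3⟩ := ih _ hmeas μ' le_rfl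
    refine ⟨ν, hν1, ?_, ?_⟩
    · rw [hν2]
      unfold sig4
      have e1 : μ' 0 + μ' 2 = μ 0 + μ 2 := by rw [c0, c2]; omega
      have e2 : μ' 1 + μ' 3 = μ 1 + μ 3 := by rw [c1, c3]; omega
      have e3 : μ' 2 + μ' 3 = μ 2 + μ 3 := by rw [c2, c3]; omega
      rw [e1, e2, e3]
    · have hgI : (X 0 * X 3 - X 1 * X 2 : MvPolynomial (Fin 4) k) ∈ I4 k :=
        Ideal.subset_span rfl
      have hgf : (X 0 * X 3 - X 1 * X 2 : MvPolynomial (Fin 4) k)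
          = monomial p 1 - monomial q 1 := by
        rw [XX_eq, XX_eq, hp, hq]
      have hmem : monomial μ (1:k) - monomial μ' 1 ∈ I4 k :=
        step_mem _ hgI hgf hle
      have := (I4 k).add_mem hmem hν3
      simpa using this
  · refine ⟨μ, ?_, rfl, by simp [(I4 k).zero_mem]⟩
    unfold Std4
    omega

lemma Phi5_I5_zero : ∀ g ∈ I5 k, Phi5 g = 0 := by
  intro g hg
  have hle : I5 k ≤ RingHom.ker (Phi5 (k := k)).toRingHom := by
    rw [I5, Ideal.span_le]
    rintro x hx
    simp only [Set.mem_insert_iff, Set.mem_singleton_iff] at hx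
    rcases hx with rfl | rfl | rfl <;>
      · simp only [SetLike.mem_coe, RingHom.mem_ker, AlgHom.toRingHom_eq_coe,
          RingHom.coe_coe, Phi5, map_sub, map_mul, map_pow, aeval_X]
        simp [Matrix.cons_val_zero, Matrix.cons_val_one]
        ring
  exact hle hg

lemma Phi4_I4_zero : ∀ g ∈ I4 k, Phi4 g = 0 := by
  intro g hg
  have hle : I4 k ≤ RingHom.ker (Phi4 (k := k)).toRingHom := by
    rw [I4, Ideal.span_le]
    rintro x hx
    simp only [Set.mem_singleton_iff] at hx
    subst hx
    simp only [SetLike.mem_coe, RingHom.mem_ker, AlgHom.toRingHom_eq_coe,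
      RingHom.coe_coe, Phi4, map_sub, map_mul, aeval_X]
    simp [Matrix.cons_val_zero, Matrix.cons_val_one]
    ring
  exact hle hg

lemma mem_I5_of_phi5 {p : MvPolynomial (Fin 5) k} (h : Phi5 p = 0) : p ∈ I5 k := by
  have hred := fun μ : Fin 5 →₀ ℕ => reduce5 (4 ^ μ 0 * (μ 1 + 2)) μ le_rfl (k := k)
  choose ν hν1 hν2 hν3 using hred
  set r : MvPolynomial (Fin 5) k :=
    ∑ μ ∈ p.support, monomial (ν μ) (coeff μ p) with hr
  have hpr : p - r ∈ I5 k := by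
    have heq : p - r = ∑ μ ∈ p.support,
        (monomial μ (coeff μ p) - monomial (ν μ) (coeff μ p)) := by
      rw [Finset.sum_sub_distrib, hr, ← p.as_sum]
    rw [heq]
    refine Ideal.sum_mem _ fun μ hμ => ?_
    have : monomial μ (coeff μ p) - monomial (ν μ) (coeff μ p)
        = C (coeff μ p) * (monomial μ 1 - monomial (ν μ) 1) := by
      rw [mul_sub, C_mul_monomial, C_mul_monomial, mul_one]
    rw [this]
    exact Ideal.mul_mem_left _ _ (hν3 μ)
  have hPhir : Phi5 r = 0 := by
    have h2 : Phi5 (p - r) = 0 := Phi5_I5_zero _ hpr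
    rw [map_sub, h, zero_sub, neg_eq_zero] at h2
    exact h2
  have hsupp : ∀ μ ∈ r.support, Std5 μ := by
    intro μ hμ
    rw [hr] at hμ
    have := MvPolynomial.support_sum hμ
    simp only [Finset.mem_biUnion] at this
    obtain ⟨τ, hτ, hμτ⟩ := this
    have := support_monomial_subset hμτ
    rw [Finset.mem_singleton] at this
    rw [this]
    exact hν1 τ
  have hr0 : r = 0 := phi5_eq_zero hsupp hPhir
  have : p = p - r := by rw [hr0, sub_zero]
  rw [this]
  exact hpr

lemma mem_I4_of_phi4 {p : MvPolynomial (Fin 4) k} (h : Phi4 p = 0) : p ∈ I4 k := by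
  have hred := fun μ : Fin 4 →₀ ℕ => reduce4 (μ 0) μ le_rfl (k := k)
  choose ν hν1 hν2 hν3 using hred
  set r : MvPolynomial (Fin 4) k :=
    ∑ μ ∈ p.support, monomial (ν μ) (coeff μ p) with hr
  have hpr : p - r ∈ I4 k := by
    have heq : p - r = ∑ μ ∈ p.support,
        (monomial μ (coeff μ p) - monomial (ν μ) (coeff μ p)) := by
      rw [Finset.sum_sub_distrib, hr, ← p.as_sum]
    rw [heq]
    refine Ideal.sum_mem _ fun μ hμ => ?_
    have : monomial μ (coeff μ p) - monomial (ν μ) (coeff μ p)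
        = C (coeff μ p) * (monomial μ 1 - monomial (ν μ) 1) := by
      rw [mul_sub, C_mul_monomial, C_mul_monomial, mul_one]
    rw [this]
    exact Ideal.mul_mem_left _ _ (hν3 μ)
  have hPhir : Phi4 r = 0 := by
    have h2 : Phi4 (p - r) = 0 := Phi4_I4_zero _ hpr
    rw [map_sub, h, zero_sub, neg_eq_zero] at h2
    exact h2
  have hsupp : ∀ μ ∈ r.support, Std4 μ := by
    intro μ hμ
    rw [hr] at hμ
    have := MvPolynomial.support_sum hμ
    simp only [Finset.mem_biUnion] at this
    obtain ⟨τ, hτ, hμτ⟩ := this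
    have := support_monomial_subset hμτ
    rw [Finset.mem_singleton] at this
    rw [this]
    exact hν1 τ
  have hr0 : r = 0 := phi4_eq_zero hsupp hPhir
  have : p = p - r := by rw [hr0, sub_zero]
  rw [this]
  exact hpr
noncomputable def psi (k : Type*) [Field k] :
    MvPolynomial (Fin 5) k →ₐ[k] ConeRing k :=
  aeval ![coneGen k 0 ^ 2, coneGen k 0 * coneGen k 1, coneGen k 1 ^ 2,
    coneGen k 2, coneGen k 3]

noncomputable def rho (k : Type*) [Field k] :
    ConeRing k →ₐ[k] MvPolynomial (Fin 3) k :=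
  Ideal.Quotient.liftₐ (I4 k) Phi4 (Phi4_I4_zero (k := k))

lemma rho_coneGen (i : Fin 4) : rho k (coneGen k i) = Phi4 (X i) := rfl

lemma rho_comp_psi (p : MvPolynomial (Fin 5) k) : rho k (psi k p) = Phi5 p := by
  have : (rho k).comp (psi k) = Phi5 (k := k) := by
    apply MvPolynomial.algHom_ext
    intro i
    fin_cases i <;>
      simp [psi, Phi5, Phi4, rho_coneGen]
  exact congrFun (congrArg DFunLike.coe this) p

set_option synthInstance.maxHeartbeats 1000000 in
lemma coneRel : coneGen k 0 * coneGen k 3 - coneGen k 1 * coneGen k 2 = 0 := by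
  simp only [coneGen, ← map_mul, ← map_sub]
  rw [Ideal.Quotient.eq_zero_iff_mem]
  exact Ideal.subset_span rfl

set_option synthInstance.maxHeartbeats 1000000 in
set_option maxHeartbeats 1000000 in
lemma psi_I5_zero : ∀ g ∈ I5 k, psi k g = 0 := by
  intro g hg
  have hle : I5 k ≤ RingHom.ker (psi k).toRingHom := by
    rw [I5, Ideal.span_le]
    rintro x hx
    simp only [Set.mem_insert_iff, Set.mem_singleton_iff] at hx
    have hc := coneRel (k := k)
    rcases hx with rfl | rfl | rfl <;>
      simp only [SetLike.mem_coe, RingHom.mem_ker, AlgHom.toRingHom_eq_coe,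
        RingHom.coe_coe, psi, map_sub, map_mul, map_pow, aeval_X,
        Matrix.cons_val_zero, Matrix.cons_val_one, Matrix.head_cons,
        Matrix.cons_val_two, Matrix.tail_cons, Matrix.cons_val_three,
        Matrix.cons_val_four]
    · ring
    · linear_combination (coneGen k 0) * hc
    · linear_combination (coneGen k 1) * hc
  exact hle hg

noncomputable def psiBar (k : Type*) [Field k] :
    FranciaRing k →ₐ[k] ConeRing k :=
  Ideal.Quotient.liftₐ (I5 k) (psi k) (psi_I5_zero (k := k))

lemma psiBar_mk (p : MvPolynomial (Fin 5) k) :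
    psiBar k (Ideal.Quotient.mk _ p) = psi k p := rfl

lemma psiBar_injective : Function.Injective (psiBar k) := by
  rw [injective_iff_map_eq_zero]
  intro x hx
  obtain ⟨p, rfl⟩ := Ideal.Quotient.mk_surjective x
  rw [psiBar_mk] at hx
  have h5 : Phi5 p = 0 := by
    rw [← rho_comp_psi, hx, map_zero]
  exact Ideal.Quotient.eq_zero_iff_mem.mpr (mem_I5_of_phi5 h5)

lemma psiBar_range : (psiBar k).range =
    Algebra.adjoin k
      {coneGen k 0 ^ 2, coneGen k 0 * coneGen k 1, coneGen k 1 ^ 2,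
        coneGen k 2, coneGen k 3} := by
  have h1 : (psiBar k).range = (psi k).range := by
    ext x
    constructor
    · rintro ⟨q, rfl⟩
      obtain ⟨p, rfl⟩ := Ideal.Quotient.mk_surjective q
      exact ⟨p, (psiBar_mk p).symm⟩
    · rintro ⟨p, rfl⟩
      exact ⟨Ideal.Quotient.mk _ p, psiBar_mk p⟩
  rw [h1, psi, ← Algebra.adjoin_range_eq_range_aeval]
  congr 1
  ext x
  constructor
  · rintro ⟨i, rfl⟩
    fin_cases i
    · exact Set.mem_insert _ _
    · exact Set.mem_insert_of_mem _ (Set.mem_insert _ _)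
    · exact Set.mem_insert_of_mem _ (Set.mem_insert_of_mem _ (Set.mem_insert _ _))
    · exact Set.mem_insert_of_mem _ (Set.mem_insert_of_mem _
        (Set.mem_insert_of_mem _ (Set.mem_insert _ _)))
    · exact Set.mem_insert_of_mem _ (Set.mem_insert_of_mem _
        (Set.mem_insert_of_mem _ (Set.mem_insert_of_mem _ rfl)))
  · intro hx
    simp only [Set.mem_insert_iff, Set.mem_singleton_iff] at hx
    rcases hx with rfl | rfl | rfl | rfl | rfl
    · exact ⟨0, rfl⟩
    · exact ⟨1, rfl⟩
    · exact ⟨2, rfl⟩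
    · exact ⟨3, rfl⟩
    · exact ⟨4, rfl⟩

lemma subalgebra_equivOfEq_coe {A : Type*} [Semiring A] [Algebra k A]
    (S T : Subalgebra k A) (h : S = T) (x : S) :
    ((Subalgebra.equivOfEq S T h x : T) : A) = (x : A) := by
  subst h; rfl

end FranciaAux

/-- There is a `k`-algebra isomorphism from `k[x,y,z,u,v]/(xz - y², xv - yu, yv - zu)`
onto the `k`-subalgebra of `R = k[a,b,c,d]/(ad - bc)` generated by
`a², ab, b², c, d`, sending `x ↦ a²`, `y ↦ ab`, `z ↦ b²`, `u ↦ c`, `v ↦ d`. -/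
theorem exists_algEquiv_francia_to_adjoin (k : Type*) [Field k] :
    ∃ φ : FranciaRing k ≃ₐ[k]
        (Algebra.adjoin k
          {coneGen k 0 ^ 2, coneGen k 0 * coneGen k 1, coneGen k 1 ^ 2,
            coneGen k 2, coneGen k 3} : Subalgebra k (ConeRing k)),
      (φ (Ideal.Quotient.mk _ (X 0)) : ConeRing k) = coneGen k 0 ^ 2 ∧
      (φ (Ideal.Quotient.mk _ (X 1)) : ConeRing k) = coneGen k 0 * coneGen k 1 ∧
      (φ (Ideal.Quotient.mk _ (X 2)) : ConeRing k) = coneGen k 1 ^ 2 ∧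
      (φ (Ideal.Quotient.mk _ (X 3)) : ConeRing k) = coneGen k 2 ∧
      (φ (Ideal.Quotient.mk _ (X 4)) : ConeRing k) = coneGen k 3 := by
  refine ⟨(AlgEquiv.ofInjective (psiBar k) (psiBar_injective (k := k))).trans
    (Subalgebra.equivOfEq _ _ (psiBar_range (k := k))), ?_, ?_, ?_, ?_, ?_⟩ <;>
  · rw [AlgEquiv.trans_apply, subalgebra_equivOfEq_coe,
      AlgEquiv.ofInjective_apply, psiBar_mk]
    simp [psi]
end

section
/- The images in A of the four elements a², b², ab + ba, and c² all lie in the center of the k-algebra A. -/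
/-- The relations `ac + ca = 0`, `bc + cb = 0`, `ab - ba - 2c³ = 0` on the free
associative algebra `k⟨a,b,c⟩`; quotienting by the ring congruence they generate
is the quotient by the two-sided ideal generated by these three elements. -/
inductive CdvRel (k : Type*) [Field k] :
    FreeAlgebra k (Fin 3) → FreeAlgebra k (Fin 3) → Prop
  | ac : CdvRel k (FreeAlgebra.ι k 0 * FreeAlgebra.ι k 2
      + FreeAlgebra.ι k 2 * FreeAlgebra.ι k 0) 0
  | bc : CdvRel k (FreeAlgebra.ι k 1 * FreeAlgebra.ι k 2
      + FreeAlgebra.ι k 2 * FreeAlgebra.ι k 1) 0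
  | ab : CdvRel k (FreeAlgebra.ι k 0 * FreeAlgebra.ι k 1
      - FreeAlgebra.ι k 1 * FreeAlgebra.ι k 0 - 2 * FreeAlgebra.ι k 2 ^ 3) 0

/-- The algebra `A = k⟨a,b,c⟩/(ac + ca, bc + cb, ab - ba - 2c³)`. -/
abbrev CdvAlgebra (k : Type*) [Field k] : Type _ := RingQuot (CdvRel k)

/-- The images of the generators `a`, `b`, `c` in `A`. -/
noncomputable def cdvGen (k : Type*) [Field k] (i : Fin 3) : CdvAlgebra k :=
  RingQuot.mkAlgHom k (CdvRel k) (FreeAlgebra.ι k i)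

lemma cdv_adjoin_top (k : Type*) [Field k] :
    Algebra.adjoin k (Set.range (cdvGen k)) = ⊤ := by
  have hr : Set.range (cdvGen k)
      = (RingQuot.mkAlgHom k (CdvRel k)) '' (Set.range (FreeAlgebra.ι k)) := by
    rw [← Set.range_comp]; rfl
  rw [hr, ← AlgHom.map_adjoin, FreeAlgebra.adjoin_range_ι, Algebra.map_top,
    AlgHom.range_eq_top]
  exact RingQuot.mkAlgHom_surjective k (CdvRel k)

/-- The images in `A` of `a²`, `b²`, `ab + ba` and `c²` are central. -/
theorem cdv_generators_central (k : Type*) [Field k] [CharZero k] :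
    cdvGen k 0 ^ 2 ∈ Subalgebra.center k (CdvAlgebra k) ∧
    cdvGen k 1 ^ 2 ∈ Subalgebra.center k (CdvAlgebra k) ∧
    cdvGen k 0 * cdvGen k 1 + cdvGen k 1 * cdvGen k 0
      ∈ Subalgebra.center k (CdvAlgebra k) ∧
    cdvGen k 2 ^ 2 ∈ Subalgebra.center k (CdvAlgebra k) := by
  set a := cdvGen k 0 with ha
  set b := cdvGen k 1 with hb
  set c := cdvGen k 2 with hc
  -- the three relations in the quotient
  have hE1 : a * c + c * a = 0 := by
    have := RingQuot.mkAlgHom_rel k (CdvRel.ac (k := k))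
    simpa [ha, hc, cdvGen, map_add, map_mul] using this
  have hE2 : b * c + c * b = 0 := by
    have := RingQuot.mkAlgHom_rel k (CdvRel.bc (k := k))
    simpa [hb, hc, cdvGen, map_add, map_mul] using this
  have hE3two : a * b - b * a - 2 * c ^ 3 = 0 := by
    have := RingQuot.mkAlgHom_rel k (CdvRel.ab (k := k))
    simpa [ha, hb, hc, cdvGen, map_add, map_mul, map_sub, map_pow, map_ofNat] using this
  have hE3 : a * b - b * a - (c ^ 3 + c ^ 3) = 0 := by
    rw [← two_mul]; exact hE3two
  -- derived relations
  have hQa : a * c ^ 3 + c ^ 3 * a = 0 := by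
    have h : a * c ^ 3 + c ^ 3 * a
        = (a*c + c*a) * c^2 - c * (a*c + c*a) * c + c^2 * (a*c + c*a) := by
      noncomm_ring
    rw [h, hE1]; noncomm_ring
  have hQb : b * c ^ 3 + c ^ 3 * b = 0 := by
    have h : b * c ^ 3 + c ^ 3 * b
        = (b*c + c*b) * c^2 - c * (b*c + c*b) * c + c^2 * (b*c + c*b) := by
      noncomm_ring
    rw [h, hE2]; noncomm_ring
  -- commutators with generators
  have haab : b * a^2 = a^2 * b := by
    have h : a^2 * b - b * a^2
        = a * (a*b - b*a - (c^3 + c^3)) + (a*b - b*a - (c^3 + c^3)) * a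
          + ((a * c^3 + c^3 * a) + (a * c^3 + c^3 * a)) := by
      simp only [mul_sub, sub_mul, mul_add, add_mul, mul_assoc, pow_succ,
        pow_zero, one_mul]
      abel
    rw [hE3, hQa] at h
    have h0 : a^2 * b - b * a^2 = 0 := by rw [h]; noncomm_ring
    exact (sub_eq_zero.mp h0).symm
  have haac : c * a^2 = a^2 * c := by
    have h : a^2 * c - c * a^2 = a * (a*c + c*a) - (a*c + c*a) * a := by
      noncomm_ring
    rw [hE1] at h
    have h0 : a^2 * c - c * a^2 = 0 := by rw [h]; noncomm_ring
    exact (sub_eq_zero.mp h0).symm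
  have hbba : a * b^2 = b^2 * a := by
    have h : a * b^2 - b^2 * a
        = b * (a*b - b*a - (c^3 + c^3)) + (a*b - b*a - (c^3 + c^3)) * b
          + ((b * c^3 + c^3 * b) + (b * c^3 + c^3 * b)) := by
      simp only [mul_sub, sub_mul, mul_add, add_mul, mul_assoc, pow_succ,
        pow_zero, one_mul]
      abel
    rw [hE3, hQb] at h
    have h0 : a * b^2 - b^2 * a = 0 := by rw [h]; noncomm_ring
    exact sub_eq_zero.mp h0
  have hbbc : c * b^2 = b^2 * c := by
    have h : b^2 * c - c * b^2 = b * (b*c + c*b) - (b*c + c*b) * b := by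
      noncomm_ring
    rw [hE2] at h
    have h0 : b^2 * c - c * b^2 = 0 := by rw [h]; noncomm_ring
    exact (sub_eq_zero.mp h0).symm
  have habc : c * (a*b + b*a) = (a*b + b*a) * c := by
    have h : (a*b + b*a) * c - c * (a*b + b*a)
        = a * (b*c + c*b) - (a*c + c*a) * b + b * (a*c + c*a)
          - (b*c + c*b) * a := by noncomm_ring
    rw [hE1, hE2] at h
    have h0 : (a*b + b*a) * c - c * (a*b + b*a) = 0 := by rw [h]; noncomm_ring
    exact (sub_eq_zero.mp h0).symm
  have haba : a * (a*b + b*a) = (a*b + b*a) * a := by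
    have h : a * (a*b + b*a) - (a*b + b*a) * a = a^2 * b - b * a^2 := by
      noncomm_ring
    rw [haab] at h
    have h0 : a * (a*b + b*a) - (a*b + b*a) * a = 0 := by rw [h]; noncomm_ring
    exact sub_eq_zero.mp h0
  have habb : b * (a*b + b*a) = (a*b + b*a) * b := by
    have h : b * (a*b + b*a) - (a*b + b*a) * b = b^2 * a - a * b^2 := by
      noncomm_ring
    rw [← hbba] at h
    have h0 : b * (a*b + b*a) - (a*b + b*a) * b = 0 := by rw [h]; noncomm_ring
    exact sub_eq_zero.mp h0
  have hcca : a * c^2 = c^2 * a := by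
    have h : c^2 * a - a * c^2 = c * (a*c + c*a) - (a*c + c*a) * c := by
      noncomm_ring
    rw [hE1] at h
    have h0 : c^2 * a - a * c^2 = 0 := by rw [h]; noncomm_ring
    exact (sub_eq_zero.mp h0).symm
  have hccb : b * c^2 = c^2 * b := by
    have h : c^2 * b - b * c^2 = c * (b*c + c*b) - (b*c + c*b) * c := by
      noncomm_ring
    rw [hE2] at h
    have h0 : c^2 * b - b * c^2 = 0 := by rw [h]; noncomm_ring
    exact (sub_eq_zero.mp h0).symm
  -- generation argument
  have key : ∀ z : CdvAlgebra k,
      (a * z = z * a) → (b * z = z * b) → (c * z = z * c) →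
      z ∈ Subalgebra.center k (CdvAlgebra k) := by
    intro z hza hzb hzc
    rw [Subalgebra.mem_center_iff]
    intro g
    have hg : g ∈ Subalgebra.centralizer k ({z} : Set (CdvAlgebra k)) := by
      have hle : Algebra.adjoin k (Set.range (cdvGen k))
          ≤ Subalgebra.centralizer k ({z} : Set (CdvAlgebra k)) := by
        rw [Algebra.adjoin_le_iff]
        rintro _ ⟨i, rfl⟩
        rw [SetLike.mem_coe, Subalgebra.mem_centralizer_iff]
        rintro m rfl
        fin_cases i
        · exact hza.symm
        · exact hzb.symm
        · exact hzc.symm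
      rw [cdv_adjoin_top] at hle
      exact hle Algebra.mem_top
    rw [Subalgebra.mem_centralizer_iff] at hg
    exact (hg z rfl).symm
  refine ⟨key _ (by noncomm_ring) haab haac,
    key _ hbba (by noncomm_ring) hbbc,
    key _ haba habb habc,
    key _ hcca hccb (by noncomm_ring)⟩
end

section
/- In the algebra A, the identity (ab + ba)² − 4·a²·b² = 4·(c²)³ holds; equivalently, with x = a², y = b², z = ab + ba, t = c², one has z² − 4xy = 4t³ in A. -/
lemma cdv_key {A : Type*} [Ring A] (a b c : A)
    (h1 : a*c + c*a = 0) (h2 : b*c + c*b = 0) (h3 : a*b - b*a - 2*c^3 = 0) :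
    (a*b + b*a)^2 - 4*(a^2)*(b^2) = 4*(c^2)^3 := by
  have hca : c*a = -(a*c) := by rw [eq_neg_iff_add_eq_zero, add_comm]; exact h1
  have hcb : c*b = -(b*c) := by rw [eq_neg_iff_add_eq_zero, add_comm]; exact h2
  have hab : a*b = b*a + 2*c^3 := by rw [sub_sub] at h3; exact sub_eq_zero.mp h3
  have r1 : ∀ x : A, a*(b*x) = b*(a*x) + 2*(c*(c*(c*x))) := fun x => by
    rw [← mul_assoc, hab]; noncomm_ring
  have r2 : ∀ x : A, c*(a*x) = -(a*(c*x)) := fun x => by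
    rw [← mul_assoc, hca]; noncomm_ring
  have r3 : ∀ x : A, c*(b*x) = -(b*(c*x)) := fun x => by
    rw [← mul_assoc, hcb]; noncomm_ring
  have rnum : ∀ x y : A, x*(2*y) = 2*(x*y) := fun x y => by noncomm_ring
  simp only [pow_succ, pow_zero, one_mul, mul_assoc, mul_add, add_mul, mul_neg,
    neg_mul, mul_sub, sub_mul, rnum, r1, r2, r3, hab, hca, hcb]
  noncomm_ring

/-- In `A`, the identity `(ab + ba)² - 4a²b² = 4(c²)³` holds, i.e. with
`x = a²`, `y = b²`, `z = ab + ba`, `t = c²` one has `z² - 4xy = 4t³`. -/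
theorem cdv_center_relation (k : Type*) [Field k] [CharZero k] :
    (cdvGen k 0 * cdvGen k 1 + cdvGen k 1 * cdvGen k 0) ^ 2
        - 4 * (cdvGen k 0 ^ 2) * (cdvGen k 1 ^ 2)
      = 4 * (cdvGen k 2 ^ 2) ^ 3 := by
  have h1 : cdvGen k 0 * cdvGen k 2 + cdvGen k 2 * cdvGen k 0 = 0 := by
    have := RingQuot.mkAlgHom_rel k (CdvRel.ac (k := k))
    simpa [cdvGen, map_ofNat] using this
  have h2 : cdvGen k 1 * cdvGen k 2 + cdvGen k 2 * cdvGen k 1 = 0 := by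
    have := RingQuot.mkAlgHom_rel k (CdvRel.bc (k := k))
    simpa [cdvGen, map_ofNat] using this
  have h3 : cdvGen k 0 * cdvGen k 1 - cdvGen k 1 * cdvGen k 0
      - 2 * cdvGen k 2 ^ 3 = 0 := by
    have := RingQuot.mkAlgHom_rel k (CdvRel.ab (k := k))
    simpa [cdvGen, map_ofNat] using this
  exact cdv_key (cdvGen k 0) (cdvGen k 1) (cdvGen k 2) h1 h2 h3
end
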